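/- arXiv:1506.01789 — 5 statements merged into one kernel-verified Lean document; each statement's English description precedes it below -/
import Mathlib

section
/- Suppose P̃ ∈ BM_d is an irreducible stochastic matrix on F, and there exist b ∈ (0,∞), a column vector v ∈ BI_d with v(k,i) ≥ 1 for all (k,i), and a nondecreasing differentiable concave φ : [1,∞) → (0,∞) with φ'(t) → 0 as t → ∞, such that for some M ≥ 1 and K ∈ ℤ≥0, P̃^M v ≤ v − φ∘v + b·1_K entrywise and P̃^M(K;0)e > 0 entrywise. Let B > 0 satisfy B·P̃^M(K;0)e ≥ b·e entrywise. Define φ̃(x) = (φ(1)/φ(B+1))·φ(x) for x ≥ 1, b̃ = b + B, and the column vector ṽ by ṽ(0,i) = v(0,i) and ṽ(k,i) = v(k,i) + B for k ≥ 1, i ∈ D. Then ṽ ∈ BI_d, φ̃ is a nondecreasing differentiable concave function from [1,∞) to (0,∞) with φ̃'(t) → 0, and P̃^M ṽ ≤ ṽ − φ̃∘ṽ + b̃·1_0 entrywise. -/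
/-!
Write `ṽ = v + B·χ` with `χ` the indicator of the levels `k ≥ 1`. Since `P̃^M` is stochastic,
`P̃^M ṽ = P̃^M v + B·(e − P̃^M(·;0)e)`, so on level `k ≥ 1` the drift of `ṽ` exceeds that of `v`
by at most `B − B·P̃^M(k;0)e`. Block monotonicity is preserved under powers, because `P g ∈ BI_d`
for every bounded nonnegative `g ∈ BI_d` (Abel summation against the tail sums of the rows);
applied to `g = χ` it makes `k ↦ P̃^M(k;0)e` nonincreasing, hence `B·P̃^M(k;0)e ≥ b` for
`1 ≤ k ≤ K`. Finally, concavity of `φ` gives `φ(1)·φ(x + B) ≤ φ(B + 1)·φ(x)`, that is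
`φ̃(x + B) ≤ φ(x)`, which absorbs the shift of `v` by `B`.
-/

open Filter Set MeasureTheory

namespace MasuTrunc

/-- The state space `F = ℤ≥0 × {1,…,d}`. -/
abbrev S (d : ℕ) : Type := ℕ × Fin d

variable {d : ℕ}

/-- A (row-)stochastic matrix on `F`. -/
def IsStochastic (p : S d → S d → ℝ) : Prop :=
  (∀ s t, 0 ≤ p s t) ∧ ∀ s, HasSum (p s) 1

/-- Block monotonicity (`P ∈ BM_d`). -/
def BlockMonotone (p : S d → S d → ℝ) : Prop :=
  ∀ (k l : ℕ) (i j : Fin d),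
    (∑' m : ℕ, p (k, i) (l + m, j)) ≤ ∑' m : ℕ, p (k + 1, i) (l + m, j)

/-- Block-wise domination `p ≺_d q`. -/
def BlockDominated (p q : S d → S d → ℝ) : Prop :=
  ∀ (k l : ℕ) (i j : Fin d),
    (∑' m : ℕ, p (k, i) (l + m, j)) ≤ ∑' m : ℕ, q (k, i) (l + m, j)

/-- Block increasing column vectors (`f ∈ BI_d`). -/
def BlockIncreasing (v : S d → ℝ) : Prop :=
  ∀ (k : ℕ) (i : Fin d), v (k, i) ≤ v (k + 1, i)

/-- Entries of the matrix power `P^n`. -/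
noncomputable def matpow (p : S d → S d → ℝ) : ℕ → S d → S d → ℝ
  | 0 => fun s t => if s = t then (1 : ℝ) else 0
  | n + 1 => fun s t => ∑' u : S d, matpow p n s u * p u t

/-- Irreducibility of a countable-state transition matrix. -/
def ChainIrreducible (p : S d → S d → ℝ) : Prop :=
  ∀ s t : S d, ∃ n : ℕ, 0 < matpow p n s t

/-- A stationary probability vector of `p`. -/
def IsStationaryDist (p : S d → S d → ℝ) (π : S d → ℝ) : Prop :=
  (∀ s, 0 ≤ π s) ∧ HasSum π 1 ∧ ∀ t : S d, (∑' s : S d, π s * p s t) = π t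

/-- `ϖ` is the stationary probability vector of the `d×d` stochastic matrix
`Ψ = Σ_m P(k;m)` (independent of `k`; taken at `k = 0`). -/
def IsPsiStationary (p : S d → S d → ℝ) (ϖ : Fin d → ℝ) : Prop :=
  (∀ i, 0 ≤ ϖ i) ∧ (∑ i, ϖ i) = 1 ∧
    ∀ j : Fin d, (∑ i : Fin d, ϖ i * ∑' m : ℕ, p (0, i) (m, j)) = ϖ j

/-- The conditions on `φ` in the subgeometric drift condition: nondecreasing,
positive, differentiable and concave on `[1,∞)`, with `φ'(t) → 0` as `t → ∞`. -/
def GoodPhi (φ : ℝ → ℝ) : Prop :=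
  MonotoneOn φ (Ici 1) ∧ (∀ t ∈ Ici (1 : ℝ), 0 < φ t) ∧
    (∀ t ∈ Ici (1 : ℝ), DifferentiableAt ℝ φ t) ∧
    ConcaveOn ℝ (Ici 1) φ ∧ Tendsto (deriv φ) atTop (nhds 0)

/-- `H_φ(x) = ∫_1^x dy / φ(y)`. -/
noncomputable def Hphi (φ : ℝ → ℝ) (x : ℝ) : ℝ := ∫ y in (1:ℝ)..x, (φ y)⁻¹

/-- `Hinv` is the inverse function `H_φ^{-1} : [0,∞) → [1,∞)` of `H_φ`. -/
def IsHinv (φ Hinv : ℝ → ℝ) : Prop :=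
  ∀ x : ℝ, 0 ≤ x → 1 ≤ Hinv x ∧ Hphi φ (Hinv x) = x

/-- `r_φ(x) = φ(H_φ^{-1}(x))` for `x ≥ 0`, and `r_φ(x) = 0` for `x < 0`. -/
noncomputable def rphi (φ Hinv : ℝ → ℝ) (x : ℝ) : ℝ :=
  if 0 ≤ x then φ (Hinv x) else 0

/-- The drift inequality `P v ≤ v - φ∘v + b·1_0`. -/
def DriftCond (p : S d → S d → ℝ) (v : S d → ℝ) (φ : ℝ → ℝ) (b : ℝ) : Prop :=
  ∀ s : S d, (∑' t : S d, p s t * v t) ≤ v s - φ (v s) + (if s.1 = 0 then b else 0)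

/-- The LC-block-augmented truncation `(n)P` of `p`. -/
noncomputable def trunc (p : S d → S d → ℝ) (n : ℕ) : S d → S d → ℝ :=
  fun s t =>
    if t.1 < n then p s t
    else if t.1 = n then ∑' m : ℕ, p s (n + m, t.2)
    else 0

/-- Total variation distance `‖μ − η‖ = Σ_s |μ(s) − η(s)|`. -/
noncomputable def tv (μ η : S d → ℝ) : ℝ := ∑' s : S d, |μ s - η s|

/-- `hitProb p n s` is the probability, starting from `s`, that the first
return time `τ0+ = inf{ν ≥ 1 : X_ν = 0}` to level zero equals `n`. -/
noncomputable def hitProb (p : S d → S d → ℝ) : ℕ → S d → ℝ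
  | 0 => fun _ => 0
  | 1 => fun s => ∑' t : S d, if t.1 = 0 then p s t else 0
  | n + 2 => fun s => ∑' t : S d, if t.1 = 0 then 0 else p s t * hitProb p (n + 1) t

open scoped ENNReal

theorem tsum_mul_eq_add_tsum_tail (ρ g : ℕ → ℝ≥0∞) (hg : Monotone g) :
    ∑' n, ρ n * g n = g 0 * ∑' n, ρ n + ∑' l, (g (l + 1) - g l) * ∑' m, ρ (l + 1 + m) := by
  have hg_eq : ∀ n, g n = g 0 + ∑ l ∈ Finset.range n, (g (l + 1) - g l) := fun n => by
    induction n with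
    | zero => simp
    | succ n ih =>
      rw [Finset.sum_range_succ, ← add_assoc, ← ih, add_tsub_cancel_of_le (hg n.le_succ)]
  have htail : ∀ l, ∑' n, (if l < n then ρ n else 0) = ∑' m, ρ (l + 1 + m) := fun l => by
    rw [← Summable.sum_add_tsum_nat_add' (k := l + 1) ENNReal.summable,
      Finset.sum_eq_zero fun n hn => if_neg (by simp at hn; omega), zero_add]
    exact tsum_congr fun m => by rw [if_pos (by omega), add_comm]
  calc ∑' n, ρ n * g n
      = ∑' n, (ρ n * g 0 + ∑' l, if l < n then (g (l + 1) - g l) * ρ n else 0) := by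
        refine tsum_congr fun n => ?_
        rw [hg_eq n, mul_add, Finset.mul_sum, tsum_eq_sum (s := Finset.range n)]
        · exact congrArg _ (Finset.sum_congr rfl fun l hl => by
            rw [if_pos (Finset.mem_range.mp hl), mul_comm])
        · exact fun l hl => if_neg (by simpa using hl)
    _ = g 0 * ∑' n, ρ n + ∑' l, (g (l + 1) - g l) * ∑' m, ρ (l + 1 + m) := by
        rw [ENNReal.tsum_add, ENNReal.tsum_mul_right, mul_comm, ENNReal.tsum_comm]
        congr 1
        refine tsum_congr fun l => ?_
        simp_rw [← htail, ← ENNReal.tsum_mul_left, mul_ite, mul_zero]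

theorem tsum_mul_le_tsum_mul_of_tail_le {μ ν g : ℕ → ℝ≥0∞} (hg : Monotone g)
    (h : ∀ l, ∑' m, μ (l + m) ≤ ∑' m, ν (l + m)) :
    ∑' n, μ n * g n ≤ ∑' n, ν n * g n := by
  rw [tsum_mul_eq_add_tsum_tail μ g hg, tsum_mul_eq_add_tsum_tail ν g hg]
  exact add_le_add (mul_le_mul_right (by simpa using h 0) _)
    (ENNReal.tsum_le_tsum fun l => mul_le_mul_right (h (l + 1)) _)

theorem tsum_add_le_tsum_add_tsum {α : Type*} {u w : α → ℝ} (hw : Summable w)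
    (hw0 : ∀ x, 0 ≤ w x) :
    ∑' x, (u x + w x) ≤ ∑' x, u x + ∑' x, w x := by
  by_cases hu : Summable u
  · exact (hu.tsum_add hw).le
  · have huw : ¬ Summable fun x => u x + w x := fun h => hu (by simpa using h.sub hw)
    rw [tsum_eq_zero_of_not_summable huw, tsum_eq_zero_of_not_summable hu, zero_add]
    exact tsum_nonneg hw0

theorem _root_.ConcaveOn.map_add_sub_map_le {s : Set ℝ} {f : ℝ → ℝ} (hf : ConcaveOn ℝ s f)
    {a x h : ℝ} (ha : a ∈ s) (hxh : x + h ∈ s) (hax : a ≤ x) (hh : 0 ≤ h) :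
    f (x + h) - f x ≤ f (a + h) - f a := by
  rcases hh.eq_or_lt with rfl | hh
  · simp
  -- `a + h` and `x` are the two convex combinations of `a` and `x + h` with swapped weights.
  set t := (x - a) / (x + h - a)
  have hden : 0 < x + h - a := by linarith
  have ht0 : 0 ≤ t := div_nonneg (by linarith) hden.le
  have ht1 : t ≤ 1 := (div_le_one hden).mpr (by linarith)
  have h₁ := hf.2 ha hxh ht0 (sub_nonneg.mpr ht1) (add_sub_cancel t 1)
  have h₂ := hf.2 ha hxh (sub_nonneg.mpr ht1) ht0 (sub_add_cancel 1 t)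
  have e₁ : t • a + (1 - t) • (x + h) = a + h := by
    simp only [smul_eq_mul, t]; field_simp; ring
  have e₂ : (1 - t) • a + t • (x + h) = x := by
    simp only [smul_eq_mul, t]; field_simp; ring
  rw [e₁] at h₁
  rw [e₂] at h₂
  simp only [smul_eq_mul] at h₁ h₂
  linarith

theorem tsum_eq_sum_tsum_level (f : S d → ℝ≥0∞) : ∑' t, f t = ∑ j, ∑' n, f (n, j) := by
  rw [ENNReal.tsum_prod (f := fun n j => f (n, j)), ENNReal.tsum_comm, tsum_fintype]

-- In `ℝ≥0∞` every series converges, so the interchanges of summation below are unconditional.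
noncomputable def ematpow (q : S d → S d → ℝ≥0∞) : ℕ → S d → S d → ℝ≥0∞
  | 0 => fun s t => if s = t then 1 else 0
  | n + 1 => fun s t => ∑' u, ematpow q n s u * q u t

section Kernel

variable {q : S d → S d → ℝ≥0∞}

theorem tsum_ematpow_zero_mul (g : S d → ℝ≥0∞) (s : S d) :
    ∑' t, ematpow q 0 s t * g t = g s := by
  simp [ematpow]

theorem tsum_ematpow_succ_mul (g : S d → ℝ≥0∞) (n : ℕ) (s : S d) :
    ∑' t, ematpow q (n + 1) s t * g t = ∑' u, ematpow q n s u * ∑' t, q u t * g t := by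
  simp_rw [ematpow, ← ENNReal.tsum_mul_right, ← ENNReal.tsum_mul_left, mul_assoc]
  exact ENNReal.tsum_comm

theorem tsum_ematpow (hq : ∀ s, ∑' t, q s t = 1) (n : ℕ) (s : S d) :
    ∑' t, ematpow q n s t = 1 := by
  induction n generalizing s with
  | zero => simpa using tsum_ematpow_zero_mul (q := q) 1 s
  | succ n ih => simpa [hq, ih] using tsum_ematpow_succ_mul (q := q) 1 n s

theorem ematpow_ne_top (hq : ∀ s, ∑' t, q s t = 1) (n : ℕ) (s t : S d) :
    ematpow q n s t ≠ ⊤ :=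
  ne_top_of_le_ne_top ENNReal.one_ne_top (tsum_ematpow hq n s ▸ ENNReal.le_tsum t)

theorem tsum_mul_le_tsum_succ_mul
    (hq : ∀ k l i j, ∑' m, q (k, i) (l + m, j) ≤ ∑' m, q (k + 1, i) (l + m, j)) {g : S d → ℝ≥0∞}
    (hg : ∀ k i, g (k, i) ≤ g (k + 1, i)) (k : ℕ) (i : Fin d) :
    ∑' t, q (k, i) t * g t ≤ ∑' t, q (k + 1, i) t * g t := by
  rw [tsum_eq_sum_tsum_level, tsum_eq_sum_tsum_level]
  exact Finset.sum_le_sum fun j _ => tsum_mul_le_tsum_mul_of_tail_le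
    (monotone_nat_of_le_succ fun n => hg n j) (hq k · i j)

theorem tsum_ematpow_mul_le_tsum_succ_mul
    (hq : ∀ k l i j, ∑' m, q (k, i) (l + m, j) ≤ ∑' m, q (k + 1, i) (l + m, j)) {g : S d → ℝ≥0∞}
    (hg : ∀ k i, g (k, i) ≤ g (k + 1, i)) (n k : ℕ) (i : Fin d) :
    ∑' t, ematpow q n (k, i) t * g t ≤ ∑' t, ematpow q n (k + 1, i) t * g t := by
  induction n generalizing g with
  | zero => simpa [tsum_ematpow_zero_mul] using hg k i
  | succ n ih =>
    simp_rw [tsum_ematpow_succ_mul]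
    exact ih (tsum_mul_le_tsum_succ_mul hq hg)

end Kernel

section Stochastic

variable {p : S d → S d → ℝ}

theorem IsStochastic.tsum_ofReal (hp : IsStochastic p) (s : S d) :
    ∑' t, ENNReal.ofReal (p s t) = 1 := by
  rw [← ENNReal.ofReal_tsum_of_nonneg (hp.1 s) (hp.2 s).summable, (hp.2 s).tsum_eq,
    ENNReal.ofReal_one]

theorem BlockMonotone.tsum_ofReal_le (hp : IsStochastic p) (hbm : BlockMonotone p)
    (k l : ℕ) (i j : Fin d) :
    ∑' m, ENNReal.ofReal (p (k, i) (l + m, j))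
      ≤ ∑' m, ENNReal.ofReal (p (k + 1, i) (l + m, j)) := by
  have hinj : Function.Injective fun m : ℕ => ((l + m, j) : S d) := fun a b h => by simpa using h
  rw [← ENNReal.ofReal_tsum_of_nonneg (fun _ => hp.1 _ _) ((hp.2 _).summable.comp_injective hinj),
    ← ENNReal.ofReal_tsum_of_nonneg (fun _ => hp.1 _ _) ((hp.2 _).summable.comp_injective hinj)]
  exact ENNReal.ofReal_le_ofReal (hbm k l i j)

theorem matpow_eq_toReal_ematpow (hp : IsStochastic p) (n : ℕ) (s t : S d) :
    matpow p n s t = (ematpow (fun s t => ENNReal.ofReal (p s t)) n s t).toReal := by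
  induction n generalizing t with
  | zero => simp [matpow, ematpow, apply_ite ENNReal.toReal]
  | succ n ih =>
    rw [matpow, ematpow, ENNReal.tsum_toReal_eq fun u => ENNReal.mul_ne_top
      (ematpow_ne_top hp.tsum_ofReal n s u) ENNReal.ofReal_ne_top]
    simp_rw [ih, ENNReal.toReal_mul, ENNReal.toReal_ofReal (hp.1 _ t)]

theorem isStochastic_matpow (hp : IsStochastic p) (n : ℕ) : IsStochastic (matpow p n) := by
  refine ⟨fun s t => by rw [matpow_eq_toReal_ematpow hp]; positivity, fun s => ?_⟩
  rw [show matpow p n s = _ from funext (matpow_eq_toReal_ematpow hp n s)]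
  have hsum := tsum_ematpow hp.tsum_ofReal n s
  have h := ENNReal.hasSum_toReal (hsum ▸ ENNReal.one_ne_top)
  rwa [← ENNReal.tsum_toReal_eq (ematpow_ne_top hp.tsum_ofReal n s), hsum,
    ENNReal.toReal_one] at h

theorem BlockIncreasing.tsum_matpow_mul (hp : IsStochastic p) (hbm : BlockMonotone p)
    {g : S d → ℝ} (hg : BlockIncreasing g) (hg0 : ∀ t, 0 ≤ g t) {C : ℝ} (hgC : ∀ t, g t ≤ C)
    (n : ℕ) : BlockIncreasing fun s => ∑' t, matpow p n s t * g t := by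
  set q : S d → S d → ℝ≥0∞ := fun s t => ENNReal.ofReal (p s t)
  have htoReal : ∀ s, ∑' t, matpow p n s t * g t
      = (∑' t, ematpow q n s t * ENNReal.ofReal (g t)).toReal := fun s => by
    rw [ENNReal.tsum_toReal_eq fun t => ENNReal.mul_ne_top
      (ematpow_ne_top hp.tsum_ofReal n s t) ENNReal.ofReal_ne_top]
    simp_rw [ENNReal.toReal_mul, ENNReal.toReal_ofReal (hg0 _), matpow_eq_toReal_ematpow hp]
  have hfin : ∀ s, ∑' t, ematpow q n s t * ENNReal.ofReal (g t) ≠ ⊤ := fun s =>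
    ne_top_of_le_ne_top (b := ENNReal.ofReal C) ENNReal.ofReal_ne_top <| calc
      ∑' t, ematpow q n s t * ENNReal.ofReal (g t) ≤ ∑' t, ematpow q n s t * ENNReal.ofReal C :=
        ENNReal.tsum_le_tsum fun t => mul_le_mul_right (ENNReal.ofReal_le_ofReal (hgC t)) _
      _ = ENNReal.ofReal C := by rw [ENNReal.tsum_mul_right, tsum_ematpow hp.tsum_ofReal, one_mul]
  intro k i
  dsimp only
  rw [htoReal, htoReal]
  exact ENNReal.toReal_mono (hfin _) (tsum_ematpow_mul_le_tsum_succ_mul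
    (hbm.tsum_ofReal_le hp) (fun k i => ENNReal.ofReal_le_ofReal (hg k i)) n k i)

end Stochastic

theorem BlockIncreasing.mono {v : S d → ℝ} (hv : BlockIncreasing v) {k l : ℕ} (hkl : k ≤ l)
    (i : Fin d) : v (k, i) ≤ v (l, i) :=
  monotone_nat_of_le_succ (fun n => hv n i) hkl

theorem BlockIncreasing.ite_add {v : S d → ℝ} (hv : BlockIncreasing v) {B : ℝ} (hB : 0 ≤ B) :
    BlockIncreasing fun s => if s.1 = 0 then v s else v s + B := by
  intro k i
  rcases Nat.eq_zero_or_pos k with rfl | hk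
  · simpa using (hv 0 i).trans (le_add_of_nonneg_right hB)
  · simpa [hk.ne'] using hv k i

theorem hasSum_ite_level_zero {f : S d → ℝ} {a : ℝ} (hf : HasSum f a) :
    HasSum (fun t : S d => if t.1 = 0 then 0 else f t) (a - ∑ j, f (0, j)) := by
  have hinj : Function.Injective fun j : Fin d => ((0, j) : S d) := fun a b h => by simpa using h
  have hzero : HasSum (fun t : S d => if t.1 = 0 then f t else 0) (∑ j, f (0, j)) := by
    refine (hinj.hasSum_iff fun t ht => if_neg fun h0 => ht ⟨t.2, by simp [← h0]⟩).mp ?_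
    simpa [Function.comp_def] using hasSum_fintype fun j => f (0, j)
  exact (hf.sub hzero).congr_fun fun t => by split <;> simp

theorem tsum_mul_ite_add_le {f : S d → ℝ} {a : ℝ} (hf0 : ∀ t, 0 ≤ f t) (hf : HasSum f a)
    (v : S d → ℝ) {B : ℝ} (hB : 0 ≤ B) :
    ∑' t, f t * (if t.1 = 0 then v t else v t + B)
      ≤ ∑' t, f t * v t + B * (a - ∑ j, f (0, j)) := by
  have hw := (hasSum_ite_level_zero hf).mul_left B
  calc ∑' t, f t * (if t.1 = 0 then v t else v t + B)
      = ∑' t, (f t * v t + B * if t.1 = 0 then 0 else f t) :=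
        tsum_congr fun t => by split <;> ring
    _ ≤ _ := tsum_add_le_tsum_add_tsum hw.summable fun t => by
        split <;> simp [mul_nonneg hB (hf0 t)]
    _ = _ := by rw [hw.tsum_eq]

theorem sum_matpow_level_zero_anti {p : S d → S d → ℝ} (hp : IsStochastic p)
    (hbm : BlockMonotone p) (n : ℕ) {k l : ℕ} (hkl : k ≤ l) (i : Fin d) :
    ∑ j, matpow p n (l, i) (0, j) ≤ ∑ j, matpow p n (k, i) (0, j) := by
  have hχ : BlockIncreasing fun t : S d => if t.1 = 0 then (0 : ℝ) else 1 := fun k i => by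
    by_cases hk : k = 0 <;> simp [hk]
  have hrow : ∀ s, ∑' t, matpow p n s t * (if t.1 = 0 then 0 else 1)
      = 1 - ∑ j, matpow p n s (0, j) := fun s => by
    simpa [mul_ite] using (hasSum_ite_level_zero ((isStochastic_matpow hp n).2 s)).tsum_eq
  have := (hχ.tsum_matpow_mul hp hbm (fun t => by split <;> simp) (C := 1)
    (fun t => by split <;> simp) n).mono hkl i
  rw [hrow, hrow] at this
  linarith

theorem GoodPhi.const_mul {φ : ℝ → ℝ} (hφ : GoodPhi φ) {c : ℝ} (hc : 0 < c) :
    GoodPhi fun x => c * φ x := by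
  obtain ⟨hmono, hpos, hdiff, hconc, htend⟩ := hφ
  refine ⟨fun x hx y hy hxy => mul_le_mul_of_nonneg_left (hmono hx hy hxy) hc.le,
    fun t ht => mul_pos hc (hpos t ht), fun t ht => (hdiff t ht).const_mul c,
    by simpa only [smul_eq_mul] using hconc.smul hc.le, ?_⟩
  simp_rw [deriv_const_mul_field']
  simpa using htend.const_mul c

theorem GoodPhi.div_mul_map_add_le {φ : ℝ → ℝ} (hφ : GoodPhi φ) {B x : ℝ} (hB : 0 ≤ B)
    (hx : 1 ≤ x) : φ 1 / φ (B + 1) * φ (x + B) ≤ φ x := by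
  obtain ⟨hmono, hpos, -, hconc, -⟩ := hφ
  have h1 : (1 : ℝ) ∈ Ici 1 := self_mem_Ici
  have hB1 : B + 1 ∈ Ici (1 : ℝ) := by simpa using hB
  have hincr := hconc.map_add_sub_map_le h1
    (by simpa using hx.trans (le_add_of_nonneg_right hB)) hx hB
  have hφ1B : φ 1 ≤ φ (B + 1) := hmono h1 hB1 (by simpa using hB)
  have hφ1x : φ 1 ≤ φ x := hmono h1 hx hx
  rw [add_comm 1 B] at hincr
  rw [div_mul_eq_mul_div, div_le_iff₀ (hpos _ hB1)]
  nlinarith [hpos 1 h1, mul_nonneg (sub_nonneg.mpr hφ1B) (sub_nonneg.mpr hφ1x)]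

theorem modified_drift_condition_general {d : ℕ}
    (pt : S d → S d → ℝ)
    (hpt : IsStochastic pt) (hbm : BlockMonotone pt)
    (b : ℝ)
    (v : S d → ℝ) (hvbi : BlockIncreasing v) (hv1 : ∀ s, 1 ≤ v s)
    (φ : ℝ → ℝ) (hφ : GoodPhi φ)
    (M K : ℕ)
    (hdrift : ∀ s : S d, (∑' t : S d, matpow pt M s t * v t)
        ≤ v s - φ (v s) + (if s.1 ≤ K then b else 0))
    (B : ℝ) (hB : 0 < B)
    (hBb : ∀ i : Fin d, b ≤ B * ∑ j : Fin d, matpow pt M (K, i) (0, j)) :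
    BlockIncreasing (fun s : S d => if s.1 = 0 then v s else v s + B) ∧
    GoodPhi (fun x : ℝ => φ 1 / φ (B + 1) * φ x) ∧
    ∀ s : S d,
      (∑' t : S d, matpow pt M s t * (if t.1 = 0 then v t else v t + B))
        ≤ (if s.1 = 0 then v s else v s + B)
          - φ 1 / φ (B + 1) * φ (if s.1 = 0 then v s else v s + B)
          + (if s.1 = 0 then b + B else 0) := by
  have hB1 : B + 1 ∈ Ici (1 : ℝ) := by simpa using hB.le
  have hφB1 := hφ.2.1 _ hB1
  have hc : 0 < φ 1 / φ (B + 1) := div_pos (hφ.2.1 1 self_mem_Ici) hφB1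
  refine ⟨hvbi.ite_add hB.le, hφ.const_mul hc, ?_⟩
  rintro ⟨k, i⟩
  have hPM := isStochastic_matpow hpt M
  have hsplit := tsum_mul_ite_add_le (hPM.1 (k, i)) (hPM.2 (k, i)) v hB.le
  have hr0 : 0 ≤ ∑ j, matpow pt M (k, i) (0, j) := Finset.sum_nonneg fun j _ => hPM.1 _ _
  have hdr := hdrift (k, i)
  rcases Nat.eq_zero_or_pos k with rfl | hk
  · have hc1 : φ 1 / φ (B + 1) ≤ 1 := (div_le_one hφB1).mpr (hφ.1 self_mem_Ici hB1 hB1)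
    have := mul_le_of_le_one_left (hφ.2.1 _ (hv1 (0, i))).le hc1
    simp only [Nat.zero_le, if_true] at hdr ⊢
    linarith [mul_nonneg hB.le hr0]
  · have hkey := hφ.div_mul_map_add_le hB.le (hv1 (k, i))
    simp only [hk.ne', if_false]
    split_ifs at hdr with hkK
    · have hlevel := sum_matpow_level_zero_anti hpt hbm M hkK i
      linarith [hBb i, mul_le_mul_of_nonneg_left hlevel hB.le]
    · linarith [mul_nonneg hB.le hr0]

/-- (4.12): under the `M`-step drift condition with boundary
set `{0,…,K} × D` for the irreducible `P̃ ∈ BM_d`, with `P̃^M(K;0)e > 0` and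
`B·P̃^M(K;0)e ≥ b·e`, the modified data `φ̃(x) = (φ(1)/φ(B+1))·φ(x)`,
`b̃ = b + B`, `ṽ(0,i) = v(0,i)`, `ṽ(k,i) = v(k,i) + B` for `k ≥ 1` satisfy:
`ṽ ∈ BI_d`, `φ̃` is a nondecreasing differentiable concave function on `[1,∞)`
with values in `(0,∞)` and `φ̃'(t) → 0`, and
`P̃^M ṽ ≤ ṽ − φ̃∘ṽ + b̃·1_0`. -/
theorem modified_drift_condition {d : ℕ} (hd : 0 < d)
    (pt : S d → S d → ℝ)
    (hpt : IsStochastic pt) (hbm : BlockMonotone pt) (hirrt : ChainIrreducible pt)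
    (b : ℝ) (hb : 0 < b)
    (v : S d → ℝ) (hvbi : BlockIncreasing v) (hv1 : ∀ s, 1 ≤ v s)
    (φ : ℝ → ℝ) (hφ : GoodPhi φ)
    (M K : ℕ) (hM : 1 ≤ M)
    (hdrift : ∀ s : S d, (∑' t : S d, matpow pt M s t * v t)
        ≤ v s - φ (v s) + (if s.1 ≤ K then b else 0))
    (hKpos : ∀ i : Fin d, 0 < ∑ j : Fin d, matpow pt M (K, i) (0, j))
    (B : ℝ) (hB : 0 < B)
    (hBb : ∀ i : Fin d, b ≤ B * ∑ j : Fin d, matpow pt M (K, i) (0, j)) :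
    BlockIncreasing (fun s : S d => if s.1 = 0 then v s else v s + B) ∧
    GoodPhi (fun x : ℝ => φ 1 / φ (B + 1) * φ x) ∧
    ∀ s : S d,
      (∑' t : S d, matpow pt M s t * (if t.1 = 0 then v t else v t + B))
        ≤ (if s.1 = 0 then v s else v s + B)
          - φ 1 / φ (B + 1) * φ (if s.1 = 0 then v s else v s + B)
          + (if s.1 = 0 then b + B else 0) :=
  modified_drift_condition_general pt hpt hbm b v hvbi hv1 φ hφ M K hdrift B hB hBb

end MasuTrunc
end

section
/- Let α ∈ [0,1) and let V : [0,∞) → [1,∞) be increasing, convex, and twice differentiable on (0,∞), with V'(0+) > 0, V'(x) → ∞ as x → ∞, V''(x)/V'(x) nonincreasing on (0,∞), and such that for each δ > 0 the limit L(δ) := lim_{x→∞} V'(x + δx^{1−α})/V'(x) exists with limsup_{δ↓0} L(δ) = 1. Then for any α0 ∈ (α,1): (a) log V'(x) = o(x^{α0}) as x → ∞; (b) log V(x) = o(x^{α0}) as x → ∞; and (c) lim_{x→∞} V''(x)/V'(x) = 0. -/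
open Filter Set

/-- Lemma 5.2: let `V : [0,∞) → [1,∞)` be increasing, convex
and twice differentiable on `(0,∞)` with `V'(0+) > 0`, `V'(x) → ∞`, `V''/V'`
nonincreasing, and suppose the limits `L(δ) = lim_{x→∞} V'(x+δx^{1−α})/V'(x)`
exist with `limsup_{δ↓0} L(δ) = 1`. Then for any `α0 ∈ (α,1)`:
(a) `log V'(x) = o(x^{α0})`, (b) `log V(x) = o(x^{α0})`, and
(c) `V''(x)/V'(x) → 0` as `x → ∞`. -/
theorem log_growth_of_derivative (α : ℝ) (hα0 : 0 ≤ α) (hα1 : α < 1)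
    (V : ℝ → ℝ)
    (hV1 : ∀ x : ℝ, 0 ≤ x → 1 ≤ V x)
    (hVmono : StrictMonoOn V (Ici 0))
    (hVconv : ConvexOn ℝ (Ici 0) V)
    (hVd1 : ∀ x : ℝ, 0 < x → DifferentiableAt ℝ V x)
    (hVd2 : ∀ x : ℝ, 0 < x → DifferentiableAt ℝ (deriv V) x)
    (hV'0 : ∃ c : ℝ, 0 < c ∧ Tendsto (deriv V) (nhdsWithin 0 (Ioi 0)) (nhds c))
    (hV'inf : Tendsto (deriv V) atTop atTop)
    (hanti : AntitoneOn (fun x : ℝ => deriv (deriv V) x / deriv V x) (Ioi 0))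
    (L : ℝ → ℝ)
    (hL : ∀ δ : ℝ, 0 < δ →
      Tendsto (fun x : ℝ => deriv V (x + δ * x ^ (1 - α)) / deriv V x) atTop
        (nhds (L δ)))
    (hlimsup : Filter.limsup L (nhdsWithin 0 (Ioi 0)) = 1) :
    ∀ α0 : ℝ, α < α0 → α0 < 1 →
      Tendsto (fun x : ℝ => Real.log (deriv V x) / x ^ α0) atTop (nhds 0) ∧
      Tendsto (fun x : ℝ => Real.log (V x) / x ^ α0) atTop (nhds 0) ∧
      Tendsto (fun x : ℝ => deriv (deriv V) x / deriv V x) atTop (nhds 0) := by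
  intro α0 hαα0 hα01
  have h1α : 0 < 1 - α := by linarith
  set r : ℝ → ℝ := fun x => deriv (deriv V) x / deriv V x with hr
  set f : ℝ → ℝ := fun x => Real.log (deriv V x) with hfdef
  set g : ℝ → ℝ := fun x => x + x ^ (1 - α) with hgdef
  -- Monotonicity of `deriv V` on `Ioi 0`
  have hVmonoIoi : MonotoneOn (deriv V) (Ioi 0) := by
    have := (hVconv.subset Ioi_subset_Ici_self (convex_Ioi 0)).monotoneOn_deriv
      (fun x hx => hVd1 x hx)
    exact this
  -- Positivity of `deriv V` on `Ioi 0`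
  obtain ⟨c, hc, hctend⟩ := hV'0
  have hV'pos : ∀ x : ℝ, 0 < x → 0 < deriv V x := by
    intro x hx
    have hle : c ≤ deriv V x := by
      refine le_of_tendsto hctend ?_
      filter_upwards [Ioo_mem_nhdsGT_of_mem (⟨le_rfl, hx⟩ : (0:ℝ) ∈ Ico 0 x)] with t ht
      exact hVmonoIoi ht.1 hx ht.2.le
    linarith
  -- Nonnegativity of second derivative
  have hV''nonneg : ∀ x : ℝ, 0 < x → 0 ≤ deriv (deriv V) x := by
    intro x hx
    have hd := (hVd2 x hx).hasDerivAt
    rw [hasDerivAt_iff_tendsto_slope] at hd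
    refine ge_of_tendsto hd ?_
    filter_upwards [mem_nhdsWithin_of_mem_nhds (isOpen_Ioi.mem_nhds hx),
      self_mem_nhdsWithin] with y hy hyx
    rcases lt_or_gt_of_ne (hyx : y ≠ x) with h | h
    · rw [slope_def_field]
      apply div_nonneg_iff.2
      refine Or.inr ⟨?_, ?_⟩
      · simp only [sub_nonpos]
        exact hVmonoIoi hy hx h.le
      · linarith
    · rw [slope_def_field]
      apply div_nonneg
      · simp only [sub_nonneg]
        exact hVmonoIoi hx hy h.le
      · linarith
  have hrnonneg : ∀ x : ℝ, 0 < x → 0 ≤ r x := fun x hx =>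
    div_nonneg (hV''nonneg x hx) (hV'pos x hx).le
  -- f has derivative r on Ioi 0
  have hf : ∀ x : ℝ, 0 < x → HasDerivAt f (r x) x := by
    intro x hx
    exact ((hVd2 x hx).hasDerivAt).log (ne_of_gt (hV'pos x hx))
  -- Mean value theorem for f
  have hMVT : ∀ a b : ℝ, 0 < a → a < b →
      ∃ ξ ∈ Ioo a b, f b - f a = r ξ * (b - a) := by
    intro a b ha hab
    obtain ⟨ξ, hξ, hval⟩ := exists_hasDerivAt_eq_slope f r hab
      (fun t ht => ((hf t (lt_of_lt_of_le ha ht.1)).continuousAt).continuousWithinAt)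
      (fun t ht => hf t (ha.trans ht.1))
    refine ⟨ξ, hξ, ?_⟩
    rw [hval, div_mul_cancel₀]
    exact sub_ne_zero.2 hab.ne'
  -- basic facts about `g x = x + x^(1-α)`
  have hgpos : ∀ x : ℝ, 0 < x → x < g x := by
    intro x hx
    have : (0:ℝ) < x ^ (1 - α) := Real.rpow_pos_of_pos hx _
    simp only [hgdef]
    linarith
  have hglex : ∀ x : ℝ, 1 ≤ x → g x ≤ 2 * x := by
    intro x hx
    have h1 : x ^ (1 - α) ≤ x ^ (1:ℝ) :=
      Real.rpow_le_rpow_of_exponent_le hx (by linarith)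
    rw [Real.rpow_one] at h1
    simp only [hgdef]
    linarith
  -- the log-ratio tends to log (L 1)
  have hL1 : Tendsto (fun x : ℝ => deriv V (g x) / deriv V x) atTop (nhds (L 1)) := by
    have := hL 1 one_pos
    simpa only [one_mul, hgdef] using this
  have hratio_ge : ∀ᶠ x : ℝ in atTop, 1 ≤ deriv V (g x) / deriv V x := by
    filter_upwards [eventually_ge_atTop (1:ℝ)] with x hx
    have hx0 : (0:ℝ) < x := by linarith
    exact (one_le_div (hV'pos x hx0)).2
      (hVmonoIoi (mem_Ioi.2 hx0) (mem_Ioi.2 (hx0.trans (hgpos x hx0))) (hgpos x hx0).le)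
  have hL1ge : 1 ≤ L 1 := ge_of_tendsto hL1 hratio_ge
  have hL1pos : 0 < L 1 := by linarith
  have hlogratio_eq : ∀ᶠ x : ℝ in atTop,
      Real.log (deriv V (g x) / deriv V x) = f (g x) - f x := by
    filter_upwards [eventually_gt_atTop (0:ℝ)] with x hx
    exact Real.log_div (ne_of_gt (hV'pos _ (hx.trans (hgpos x hx)))) (ne_of_gt (hV'pos x hx))
  have hLog : Tendsto (fun x : ℝ => f (g x) - f x) atTop (nhds (Real.log (L 1))) := by
    have h1 : Tendsto (fun x : ℝ => Real.log (deriv V (g x) / deriv V x)) atTop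
        (nhds (Real.log (L 1))) :=
      ((Real.continuousAt_log hL1pos.ne').tendsto.comp hL1)
    exact h1.congr' hlogratio_eq
  -- Part (c)
  have partC : Tendsto r atTop (nhds 0) := by
    rw [tendsto_order]
    constructor
    · intro a ha
      filter_upwards [eventually_gt_atTop (0:ℝ)] with x hx
      exact lt_of_lt_of_le ha (hrnonneg x hx)
    · intro a ha
      -- claim: there is x0 > 0 with r x0 < a
      have hex : ∃ x0 : ℝ, 0 < x0 ∧ r x0 < a := by
        by_contra hcon
        push_neg at hcon
        have hlow : ∀ x : ℝ, 1 ≤ x → a * x ^ (1 - α) ≤ f (g x) - f x := by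
          intro x hx
          have hx0 : (0:ℝ) < x := by linarith
          obtain ⟨ξ, hξ, hval⟩ := hMVT x (g x) hx0 (hgpos x hx0)
          rw [hval]
          have hξ0 : 0 < ξ := hx0.trans hξ.1
          have : a ≤ r ξ := hcon ξ hξ0
          have hgx : g x - x = x ^ (1 - α) := by simp [hgdef]
          rw [hgx]
          exact mul_le_mul_of_nonneg_right this (Real.rpow_pos_of_pos hx0 _).le
        have htop : Tendsto (fun x : ℝ => f (g x) - f x) atTop atTop := by
          apply tendsto_atTop_mono' _ (eventually_atTop.2 ⟨1, hlow⟩)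
          exact (tendsto_rpow_atTop h1α).const_mul_atTop ha
        exact not_tendsto_atTop_of_tendsto_nhds hLog htop
      obtain ⟨x0, hx0, hrx0⟩ := hex
      filter_upwards [eventually_ge_atTop x0, eventually_gt_atTop (0:ℝ)] with x hx hx'
      exact lt_of_le_of_lt (hanti (mem_Ioi.2 hx0) (mem_Ioi.2 hx') hx) hrx0
  -- bound: log-ratio eventually ≤ C := log (L 1) + 1
  set C : ℝ := Real.log (L 1) + 1 with hCdef
  have hCpos : 0 < C := by
    have : 0 ≤ Real.log (L 1) := Real.log_nonneg hL1ge
    linarith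
  obtain ⟨X, hX⟩ := eventually_atTop.1
    ((hLog.eventually (eventually_lt_nhds (by linarith : Real.log (L 1) < C))).and
      (eventually_ge_atTop (1:ℝ)))
  set α' : ℝ := (α + α0) / 2 with hα'def
  have hα'pos : 0 < α' := by
    simp only [hα'def]; linarith
  have hα'lt : α' < α0 := by simp only [hα'def]; linarith
  have hαα' : α < α' := by simp only [hα'def]; linarith
  -- key pointwise bound on r
  set Z : ℝ := max (2 * X) 2 with hZdef
  have hZ1 : (1:ℝ) ≤ Z := le_trans (by norm_num) (le_max_right _ _)
  have hZpos : (0:ℝ) < Z := by linarith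
  have hrB : ∀ z : ℝ, Z ≤ z → r z ≤ 2 * C * z ^ (α' - 1) := by
    intro z hz
    have hz2 : (2:ℝ) ≤ z := le_trans (le_max_right _ _) hz
    have hz0 : (0:ℝ) < z := by linarith
    set x : ℝ := z / 2 with hxdef
    have hx1 : (1:ℝ) ≤ x := by
      simp only [hxdef]; linarith
    have hx0 : (0:ℝ) < x := by linarith
    have hxX : X ≤ x := by
      have : 2 * X ≤ z := le_trans (le_max_left _ _) hz
      simp only [hxdef]; linarith
    have hgz : g x ≤ z := by
      have := hglex x hx1
      simp only [hxdef] at this ⊢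
      linarith
    obtain ⟨ξ, hξ, hval⟩ := hMVT x (g x) hx0 (hgpos x hx0)
    have hξ0 : 0 < ξ := hx0.trans hξ.1
    have hgx0 : 0 < g x := hx0.trans (hgpos x hx0)
    have hbound : f (g x) - f x < C := (hX x hxX).1
    have hgx : g x - x = x ^ (1 - α) := by simp [hgdef]
    have hrz_le : r z ≤ r ξ := by
      apply hanti (mem_Ioi.2 hξ0) (mem_Ioi.2 hz0)
      exact le_trans hξ.2.le hgz
    have hxpow : (0:ℝ) < x ^ (1 - α) := Real.rpow_pos_of_pos hx0 _
    have hkey : r z * x ^ (1 - α) ≤ C := by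
      calc r z * x ^ (1 - α) ≤ r ξ * x ^ (1 - α) :=
            mul_le_mul_of_nonneg_right hrz_le hxpow.le
        _ = f (g x) - f x := by rw [← hgx, ← hval]
        _ ≤ C := hbound.le
    have hrz : r z ≤ C * x ^ (α - 1) := by
      have h1 : r z ≤ C / x ^ (1 - α) := (le_div_iff₀ hxpow).2 hkey
      have h2 : C / x ^ (1 - α) = C * x ^ (α - 1) := by
        have he : (α - 1 : ℝ) = -(1 - α) := by ring
        rw [he, Real.rpow_neg hx0.le, div_eq_mul_inv]
      rw [h2] at h1; exact h1
    -- now convert x^(α-1) to z-power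
    have hx_pow : x ^ (α - 1) ≤ 2 * z ^ (α' - 1) := by
      have h1 : x ^ (α - 1) ≤ x ^ (α' - 1) :=
        Real.rpow_le_rpow_of_exponent_le hx1 (by linarith)
      have h2 : x ^ (α' - 1) = z ^ (α' - 1) * (2:ℝ) ^ (1 - α') := by
        rw [hxdef, Real.div_rpow hz0.le (by norm_num : (0:ℝ) ≤ 2),
          div_eq_mul_inv, ← Real.rpow_neg (by norm_num : (0:ℝ) ≤ 2)]
        ring_nf
      have h3 : (2:ℝ) ^ (1 - α') ≤ 2 := by
        nth_rewrite 2 [← Real.rpow_one 2]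
        exact Real.rpow_le_rpow_of_exponent_le one_le_two (by linarith)
      have h4 : 0 < z ^ (α' - 1) := Real.rpow_pos_of_pos hz0 _
      calc x ^ (α - 1) ≤ x ^ (α' - 1) := h1
        _ = z ^ (α' - 1) * (2:ℝ) ^ (1 - α') := h2
        _ ≤ z ^ (α' - 1) * 2 := mul_le_mul_of_nonneg_left h3 h4.le
        _ = 2 * z ^ (α' - 1) := by ring
    calc r z ≤ C * x ^ (α - 1) := hrz
      _ ≤ C * (2 * z ^ (α' - 1)) := mul_le_mul_of_nonneg_left hx_pow hCpos.le
      _ = 2 * C * z ^ (α' - 1) := by ring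
  -- antiderivative comparison: f x ≤ D + (2C/α') x^α' on [Z, ∞)
  set K : ℝ := 2 * C with hKdef
  set G : ℝ → ℝ := fun x => (K / α') * x ^ α' - f x with hGdef
  have hGderiv : ∀ x : ℝ, 0 < x → HasDerivAt G ((K / α') * (α' * x ^ (α' - 1)) - r x) x := by
    intro x hx
    exact ((Real.hasDerivAt_rpow_const (Or.inl hx.ne')).const_mul (K / α')).sub (hf x hx)
  have hGmono : MonotoneOn G (Ici Z) := by
    apply monotoneOn_of_deriv_nonneg (convex_Ici Z)
    · intro x hx
      exact ((hGderiv x (lt_of_lt_of_le hZpos hx)).continuousAt).continuousWithinAt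
    · intro x hx
      rw [interior_Ici] at hx
      exact ((hGderiv x (hZpos.trans hx)).differentiableAt).differentiableWithinAt
    · intro x hx
      rw [interior_Ici] at hx
      have hx0 : 0 < x := hZpos.trans hx
      rw [(hGderiv x hx0).deriv]
      have := hrB x (le_of_lt hx)
      have hα'ne : α' ≠ 0 := hα'pos.ne'
      have : r x ≤ K * x ^ (α' - 1) := by rw [hKdef]; exact this
      have heq : (K / α') * (α' * x ^ (α' - 1)) = K * x ^ (α' - 1) := by
        field_simp
      rw [heq]
      linarith
  set D : ℝ := f Z - (K / α') * Z ^ α' with hDdef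
  have hfle : ∀ x : ℝ, Z ≤ x → f x ≤ D + (K / α') * x ^ α' := by
    intro x hx
    have := hGmono (self_mem_Ici) (mem_Ici.2 hx) hx
    simp only [hGdef, hDdef] at this ⊢
    linarith
  -- the generic upper-bound tendsto
  have haux : ∀ D' K' : ℝ, Tendsto (fun x : ℝ => D' * x ^ (-α0) + K' * x ^ (α' - α0))
      atTop (nhds 0) := by
    intro D' K'
    have h1 : Tendsto (fun x : ℝ => x ^ (-α0)) atTop (nhds 0) :=
      tendsto_rpow_neg_atTop (by linarith)
    have h2 : Tendsto (fun x : ℝ => x ^ (α' - α0)) atTop (nhds 0) := by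
      have : α' - α0 = -(α0 - α') := by ring
      rw [this]
      exact tendsto_rpow_neg_atTop (by linarith)
    have := (h1.const_mul D').add (h2.const_mul K')
    simpa using this
  have hdiv_bound : ∀ D' K' x : ℝ, 1 ≤ x → ∀ y : ℝ, y ≤ D' + K' * x ^ α' →
      y / x ^ α0 ≤ D' * x ^ (-α0) + K' * x ^ (α' - α0) := by
    intro D' K' x hx1 y hy
    have hx0 : (0:ℝ) < x := by linarith
    have hp : (0:ℝ) < x ^ α0 := Real.rpow_pos_of_pos hx0 _
    rw [div_le_iff₀ hp]
    have e1 : D' * x ^ (-α0) * x ^ α0 = D' := by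
      rw [mul_assoc, ← Real.rpow_add hx0]; simp
    have e2 : K' * x ^ (α' - α0) * x ^ α0 = K' * x ^ α' := by
      rw [mul_assoc, ← Real.rpow_add hx0]; ring_nf
    calc y ≤ D' + K' * x ^ α' := hy
      _ = D' * x ^ (-α0) * x ^ α0 + K' * x ^ (α' - α0) * x ^ α0 := by rw [e1, e2]
      _ = (D' * x ^ (-α0) + K' * x ^ (α' - α0)) * x ^ α0 := by ring
  -- Part (a)
  have partA : Tendsto (fun x : ℝ => Real.log (deriv V x) / x ^ α0) atTop (nhds 0) := by
    apply squeeze_zero' (g := fun x : ℝ => D * x ^ (-α0) + (K / α') * x ^ (α' - α0))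
    · filter_upwards [hV'inf.eventually_ge_atTop (1:ℝ), eventually_ge_atTop (1:ℝ)] with x h1 h2
      have hx0 : (0:ℝ) < x := by linarith
      exact div_nonneg (Real.log_nonneg h1) (Real.rpow_pos_of_pos hx0 _).le
    · filter_upwards [eventually_ge_atTop Z, eventually_ge_atTop (1:ℝ)] with x hx h1
      exact hdiv_bound D (K / α') x h1 _ (hfle x hx)
    · exact haux D (K / α')
  -- Part (b)
  have partB : Tendsto (fun x : ℝ => Real.log (V x) / x ^ α0) atTop (nhds 0) := by
    -- V x ≤ 2 * V 1 * x * deriv V x eventually; so log V x ≤ log (2 V 1) + log x + log (V' x)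
    have hVbound : ∀ᶠ x : ℝ in atTop, Real.log (V x) ≤
        (Real.log (2 * V 1) + D) + (1 / α' + K / α') * x ^ α' := by
      filter_upwards [hV'inf.eventually_ge_atTop (1:ℝ), eventually_ge_atTop (max Z 2)]
        with x hV'1 hx
      have hx2 : (2:ℝ) ≤ x := le_trans (le_max_right _ _) hx
      have hxZ : Z ≤ x := le_trans (le_max_left _ _) hx
      have hx0 : (0:ℝ) < x := by linarith
      have hV10 : (1:ℝ) ≤ V 1 := hV1 1 (by norm_num)
      have hVx1 : (1:ℝ) ≤ V x := hV1 x hx0.le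
      -- convexity bound
      have hslope : (V x - V 1) / (x - 1) ≤ deriv V x := by
        have := hVconv.slope_le_deriv (mem_Ici.2 (by norm_num : (0:ℝ) ≤ 1))
          (mem_Ici.2 hx0.le) (by linarith) (hVd1 x hx0)
        rwa [slope_def_field] at this
      have hVle : V x ≤ V 1 + (x - 1) * deriv V x := by
        have hx1 : (0:ℝ) < x - 1 := by linarith
        have := (div_le_iff₀ hx1).1 hslope
        linarith
      have hVle2 : V x ≤ 2 * V 1 * (x * deriv V x) := by
        have h1 : (1:ℝ) ≤ x * deriv V x := by
          calc (1:ℝ) = 1 * 1 := by norm_num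
            _ ≤ x * deriv V x := mul_le_mul (by linarith) hV'1 (by norm_num) hx0.le
        have h2 : (x - 1) * deriv V x ≤ x * deriv V x := by
          have := hV'pos x hx0
          nlinarith
        nlinarith
      have hlogle : Real.log (V x) ≤ Real.log (2 * V 1) + Real.log x +
          Real.log (deriv V x) := by
        have hpos : (0:ℝ) < 2 * V 1 * (x * deriv V x) := by positivity
        calc Real.log (V x) ≤ Real.log (2 * V 1 * (x * deriv V x)) :=
              Real.log_le_log (by linarith) hVle2
          _ = Real.log (2 * V 1) + Real.log (x * deriv V x) :=
              Real.log_mul (by positivity) (by positivity)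
          _ = Real.log (2 * V 1) + (Real.log x + Real.log (deriv V x)) := by
              rw [Real.log_mul hx0.ne' (hV'pos x hx0).ne']
          _ = Real.log (2 * V 1) + Real.log x + Real.log (deriv V x) := by ring
      have hlogx : Real.log x ≤ (1 / α') * x ^ α' := by
        have h1 : Real.log (x ^ α') = α' * Real.log x := Real.log_rpow hx0 _
        have h2 : Real.log (x ^ α') ≤ x ^ α' := Real.log_le_self (Real.rpow_pos_of_pos hx0 _).le
        rw [h1] at h2
        rw [div_mul_eq_mul_div, le_div_iff₀ hα'pos]
        linarith
      have hflog : Real.log (deriv V x) ≤ D + (K / α') * x ^ α' := hfle x hxZ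
      calc Real.log (V x) ≤ Real.log (2 * V 1) + Real.log x + Real.log (deriv V x) := hlogle
        _ ≤ Real.log (2 * V 1) + (1 / α') * x ^ α' + (D + (K / α') * x ^ α') := by linarith
        _ = (Real.log (2 * V 1) + D) + (1 / α' + K / α') * x ^ α' := by ring
    apply squeeze_zero' (g := fun x : ℝ =>
      (Real.log (2 * V 1) + D) * x ^ (-α0) + (1 / α' + K / α') * x ^ (α' - α0))
    · filter_upwards [eventually_ge_atTop (1:ℝ)] with x hx
      have hx0 : (0:ℝ) < x := by linarith
      exact div_nonneg (Real.log_nonneg (hV1 x hx0.le)) (Real.rpow_pos_of_pos hx0 _).le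
    · filter_upwards [hVbound, eventually_ge_atTop (1:ℝ)] with x hb h1
      exact hdiv_bound _ _ x h1 _ hb
    · exact haux _ _
  exact ⟨partA, partB, partC⟩
end

section
/- Under the GI/G/1-type setup with σ < 0, fix N ≥ 1 with σ_N < 0 and M ≥ 1, and set L = MN. Let V : [0,∞) → [1,∞) be increasing, convex and twice differentiable on (0,∞) with nondecreasing derivative V'. Suppose the following constants are fixed: (1) κ > 0 and ε ∈ (0,1) such that (1−ε)·Σ_{ℓ=−L}^{∞} ℓ·A_N^{*M}(ℓ)e + 2ε·Σ_{ℓ=0}^{∞} ℓ·A_N^{*M}(ℓ)e ≤ −2κ·e componentwise; (2) δ0 > 0 and an integer K0 ≥ L such that V'(k + δ0·k^{1−α}) ≤ (1+ε)·V'(k) and V'(k−L) ≥ (1−ε)·V'(k) for all integers k ≥ K0+1; (3) an integer K ≥ K0 such that (1/V'(k))·Σ_{ℓ=⌊δ0 k^{1−α}⌋+1}^{∞} V(k+ℓ)·A_N^{*M}(ℓ)e ≤ κ·e componentwise for all integers k ≥ K+1 (here α ∈ [0,1) is fixed). Then for all integers k ≥ K+1, Σ_{ℓ=0}^{∞} P_N^M(k;ℓ)·V(ℓ)·e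 − V(k)·e ≤ −κ·V'(k)·e componentwise, where P_N^M(k;ℓ) is the (k,ℓ) block of the M-th matrix power of P_N. -/
/-!
Started at level `k > MN`, the chain `P_N` stays above level `N` for `M` steps, where it moves
like a random walk with increments `A_N`. Hence `∑_j P_N^M((k,i);(l,j)) = c(l - k)`, where
`c(q) = (A_N^{*M}(q) e)_i` is a probability distribution on `ℤ` supported in `[-MN, ∞)`, and the
drift is `∑_q c(q) (V(k+q) - V(k))`. By convexity `V(k+q) - V(k) ≤ q V'(k+q)`; condition (2) and
the monotonicity of `V'` replace `V'(k+q)` by `(1-ε) V'(k)` for `-MN ≤ q < 0` and by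
`(1+ε) V'(k)` for `0 ≤ q ≤ ⌊δ0 k^{1-α}⌋`, and condition (1) bounds the resulting first moments by
`-2κ V'(k)`. The larger jumps are bounded crudely by `c(q) V(k+q)`, which condition (3) makes at
most `κ V'(k)`.
-/

open Filter Set MeasureTheory

namespace MasuTrunc

variable {d : ℕ}

/-- Entries of the `n`-th power of a `d×d` matrix. -/
def finMatPow (Q : Fin d → Fin d → ℝ) : ℕ → Fin d → Fin d → ℝ
  | 0 => fun i j => if i = j then (1 : ℝ) else 0
  | n + 1 => fun i j => ∑ r : Fin d, finMatPow Q n i r * Q r j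

/-- `convZ F M` is the `M`-fold convolution of the family of `d×d` matrices
`{F(k); k ∈ ℤ}`. -/
noncomputable def convZ (F : ℤ → Fin d → Fin d → ℝ) : ℕ → ℤ → Fin d → Fin d → ℝ
  | 0 => fun k i j => if k = 0 ∧ i = j then (1 : ℝ) else 0
  | M + 1 => fun k i j => ∑' l : ℤ, ∑ r : Fin d, convZ F M (k - l) i r * F l r j

/-- The family `{A_N(k); k ∈ ℤ}`: `A_N(k) = 0` for `k < −N`,
`A_N(−N) = Ā(−N) = Σ_{m ≤ −N} A(m)`, and `A_N(k) = A(k)` for `k ≥ −N+1`. -/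
noncomputable def ANfam (A : ℤ → Fin d → Fin d → ℝ) (N : ℕ) :
    ℤ → Fin d → Fin d → ℝ :=
  fun k i j =>
    if k < -(N : ℤ) then 0
    else if k = -(N : ℤ) then ∑' m : ℕ, A (-(N : ℤ) - (m : ℤ)) i j
    else A k i j

/-- The modified GI/G/1-type transition matrix `P_N` with blocks
`P_N(0;ℓ) = B(ℓ)`, `P_N(k;0) = Ā(−k)` for `1 ≤ k ≤ N` (and `0` for `k > N`),
and `P_N(k;ℓ) = A_N(ℓ−k)` for `k, ℓ ≥ 1`. -/
noncomputable def PNmat (A : ℤ → Fin d → Fin d → ℝ)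
    (Bm : ℕ → Fin d → Fin d → ℝ) (N : ℕ) : S d → S d → ℝ
  | (0, i), (l, j) => Bm l i j
  | (k + 1, i), (0, j) =>
      if k + 1 ≤ N then ∑' m : ℕ, A (-((k : ℤ) + 1) - (m : ℤ)) i j else 0
  | (k + 1, i), (l + 1, j) => ANfam A N ((l : ℤ) - (k : ℤ)) i j

namespace IsStochastic

variable {p q : S d → S d → ℝ}

lemma le_one (hp : IsStochastic p) (s t : S d) : p s t ≤ 1 :=
  le_hasSum (hp.2 s) t fun u _ => hp.1 s u

lemma summable_mul_apply (hq : IsStochastic q) (hp : IsStochastic p) (s t : S d) :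
    Summable fun u => q s u * p u t :=
  (hq.2 s).summable.of_nonneg_of_le (fun u => mul_nonneg (hq.1 s u) (hp.1 u t))
    fun u => mul_le_of_le_one_right (hq.1 s u) (hp.le_one u t)

lemma hasSum_tsum_mul (hp : IsStochastic p) {a : S d → ℝ} (ha0 : ∀ u, 0 ≤ a u)
    (ha : HasSum a 1) : HasSum (fun t => ∑' u, a u * p u t) 1 := by
  set G : S d × S d → ℝ := fun x => a x.1 * p x.1 x.2
  have hfib : ∀ u, HasSum (fun t => G (u, t)) (a u) := fun u => by
    simpa using (hp.2 u).mul_left (a u)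
  have hG : Summable G := by
    refine (summable_prod_of_nonneg fun x => mul_nonneg (ha0 _) (hp.1 _ _)).2
      ⟨fun u => (hfib u).summable, ?_⟩
    exact ha.summable.congr fun u => (hfib u).tsum_eq.symm
  have hG1 : HasSum G 1 := by
    simpa only [(hG.hasSum.prod_fiberwise hfib).unique ha] using hG.hasSum
  exact ((Equiv.prodComm _ _).hasSum_iff.2 hG1).prod_fiberwise fun t =>
    (hG.prod_symm.comp_injective (Prod.mk_right_injective t)).hasSum

lemma matpow (hp : IsStochastic p) (n : ℕ) : IsStochastic (matpow p n) := by
  induction n with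
  | zero =>
    refine ⟨fun s t => by simp only [MasuTrunc.matpow]; positivity, fun s => ?_⟩
    simpa only [MasuTrunc.matpow, eq_comm] using hasSum_ite_eq s (1 : ℝ)
  | succ n ih =>
    exact ⟨fun s t => tsum_nonneg fun u => mul_nonneg (ih.1 s u) (hp.1 u t),
      fun s => hp.hasSum_tsum_mul (ih.1 s) (ih.2 s)⟩

end IsStochastic

section Convolution

variable {F : ℤ → Fin d → Fin d → ℝ}

lemma convZ_nonneg (hF : ∀ k i j, 0 ≤ F k i j) (m : ℕ) (k : ℤ) (i j : Fin d) :
    0 ≤ convZ F m k i j := by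
  induction m generalizing k j with
  | zero => simp only [convZ]; positivity
  | succ m ih =>
    exact tsum_nonneg fun l => Finset.sum_nonneg fun r _ => mul_nonneg (ih _ _) (hF _ _ _)

lemma convZ_eq_zero_of_lt {N : ℕ} (hF : ∀ k : ℤ, k < -(N : ℤ) → ∀ i j, F k i j = 0)
    (m : ℕ) {k : ℤ} (hk : k < -((m * N : ℕ) : ℤ)) (i j : Fin d) : convZ F m k i j = 0 := by
  induction m generalizing k j with
  | zero => simp [convZ, show k ≠ 0 by simpa using hk.ne]
  | succ m ih =>
    refine (tsum_congr fun l => Finset.sum_eq_zero fun r _ => ?_).trans tsum_zero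
    rcases lt_or_ge l (-(N : ℤ)) with hl | hl
    · rw [hF l hl, mul_zero]
    · rw [ih (by push_cast at hk ⊢; linarith), zero_mul]

end Convolution

section Shift

variable {f : ℤ → ℝ} {k : ℕ}

lemma natCast_sub_injective (k : ℕ) : Function.Injective fun l : ℕ => (l : ℤ) - k :=
  fun _ _ h => by simpa using h

lemma eq_zero_of_notMem_range_natCast_sub (hf : ∀ q : ℤ, q < -(k : ℤ) → f q = 0) (q : ℤ)
    (hq : q ∉ Set.range fun l : ℕ => (l : ℤ) - k) : f q = 0 :=
  hf q (not_le.1 fun h => hq ⟨(q + k).toNat, by simp only; omega⟩)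

lemma hasSum_natCast_sub_iff (hf : ∀ q : ℤ, q < -(k : ℤ) → f q = 0) {a : ℝ} :
    HasSum (fun l : ℕ => f ((l : ℤ) - k)) a ↔ HasSum f a :=
  (natCast_sub_injective k).hasSum_iff (eq_zero_of_notMem_range_natCast_sub hf)

lemma tsum_natCast_sub (hf : ∀ q : ℤ, q < -(k : ℤ) → f q = 0) :
    ∑' l : ℕ, f ((l : ℤ) - k) = ∑' q, f q :=
  (natCast_sub_injective k).tsum_eq fun q hq =>
    by_contra fun h => hq (eq_zero_of_notMem_range_natCast_sub hf q h)

end Shift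

section TruncatedChain

variable {A : ℤ → Fin d → Fin d → ℝ} {Bm : ℕ → Fin d → Fin d → ℝ} {N : ℕ}

lemma ANfam_eq_zero_of_lt {k : ℤ} (hk : k < -(N : ℤ)) (i j : Fin d) : ANfam A N k i j = 0 := by
  simp [ANfam, hk]

lemma ANfam_eq_of_gt {k : ℤ} (hk : -(N : ℤ) < k) (i j : Fin d) : ANfam A N k i j = A k i j := by
  simp [ANfam, hk.not_gt, hk.ne']

lemma ANfam_neg_self (i j : Fin d) :
    ANfam A N (-(N : ℤ)) i j = ∑' m : ℕ, A (-(N : ℤ) - (m : ℤ)) i j := by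
  simp [ANfam]

lemma ANfam_nonneg (hA : ∀ k i j, 0 ≤ A k i j) (k : ℤ) (i j : Fin d) :
    0 ≤ ANfam A N k i j := by
  unfold ANfam
  split_ifs
  exacts [le_rfl, tsum_nonneg fun m => hA _ _ _, hA _ _ _]

variable {p : S d → S d → ℝ}

lemma PNmat_eq_of_le (hpB : ∀ (l : ℕ) (i j : Fin d), p (0, i) (l, j) = Bm l i j)
    (hp0 : ∀ (k : ℕ) (i j : Fin d),
      p (k + 1, i) (0, j) = ∑' m : ℕ, A (-((k : ℤ) + 1) - (m : ℤ)) i j)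
    (hpA : ∀ (k l : ℕ) (i j : Fin d), p (k + 1, i) (l + 1, j) = A ((l : ℤ) - (k : ℤ)) i j)
    {k : ℕ} (hk : k ≤ N) (i : Fin d) (t : S d) : PNmat A Bm N (k, i) t = p (k, i) t := by
  rcases k with _ | k <;> rcases t with ⟨_ | l, j⟩
  · exact (hpB 0 i j).symm
  · exact (hpB _ i j).symm
  · simp [PNmat, hk, hp0]
  · rw [PNmat, ANfam_eq_of_gt (by omega), hpA]

lemma PNmat_add_add (hN : 1 ≤ N)
    (hp0 : ∀ (k : ℕ) (i j : Fin d),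
      p (k + 1, i) (0, j) = ∑' m : ℕ, A (-((k : ℤ) + 1) - (m : ℤ)) i j)
    (hpA : ∀ (k l : ℕ) (i j : Fin d), p (k + 1, i) (l + 1, j) = A ((l : ℤ) - (k : ℤ)) i j)
    (n l : ℕ) (i j : Fin d) : PNmat A Bm N (N + n, i) (l + n, j) = p (N, i) (l, j) := by
  obtain ⟨N, rfl⟩ : ∃ N', N = N' + 1 := ⟨N - 1, by omega⟩
  rcases l with _ | l
  · rcases n with _ | n
    · simp [PNmat, hp0]
    · rw [show N + 1 + (n + 1) = (N + n + 1) + 1 by ring, show 0 + (n + 1) = n + 1 by ring,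
        PNmat, hp0,
        show (n : ℤ) - ((N + n + 1 : ℕ) : ℤ) = -((N + 1 : ℕ) : ℤ) by push_cast; ring,
        ANfam_neg_self]
      push_cast; rfl
  · rw [show N + 1 + n = (N + n) + 1 by ring, show l + 1 + n = (l + n) + 1 by ring, PNmat,
      hpA, ANfam_eq_of_gt (by push_cast; omega)]
    congr 1
    push_cast; ring

lemma PNmat_eq_zero_of_lt {n l : ℕ} (hl : l < n) (i j : Fin d) :
    PNmat A Bm N (N + n, i) (l, j) = 0 := by
  obtain ⟨k, hk⟩ : ∃ k, N + n = k + 1 := ⟨N + n - 1, by omega⟩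
  rw [hk]
  rcases l with _ | l
  · simp [PNmat, show ¬k + 1 ≤ N by omega]
  · rw [PNmat, ANfam_eq_zero_of_lt (by omega)]

lemma PNmat_eq_ANfam {u : ℕ} (hu : N < u) (l : ℕ) (r j : Fin d) :
    PNmat A Bm N (u, r) (l, j) = ANfam A N ((l : ℤ) - u) r j := by
  obtain ⟨u, rfl⟩ : ∃ u', u = u' + 1 := ⟨u - 1, by omega⟩
  rcases l with _ | l
  · rw [ANfam_eq_zero_of_lt (by omega)]
    simp [PNmat, show ¬u + 1 ≤ N by omega]
  · rw [PNmat]; congr 1; push_cast; ring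

/-- Rows `k ≤ N` of `P_N` are those of `P`; row `N + n` is row `N` of `P` moved up `n` levels. -/
lemma isStochastic_PNmat (hN : 1 ≤ N)
    (hpB : ∀ (l : ℕ) (i j : Fin d), p (0, i) (l, j) = Bm l i j)
    (hp0 : ∀ (k : ℕ) (i j : Fin d),
      p (k + 1, i) (0, j) = ∑' m : ℕ, A (-((k : ℤ) + 1) - (m : ℤ)) i j)
    (hpA : ∀ (k l : ℕ) (i j : Fin d), p (k + 1, i) (l + 1, j) = A ((l : ℤ) - (k : ℤ)) i j)
    (hp : IsStochastic p) : IsStochastic (PNmat A Bm N) := by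
  suffices h : ∀ s, (∀ t, 0 ≤ PNmat A Bm N s t) ∧ HasSum (PNmat A Bm N s) 1 from
    ⟨fun s => (h s).1, fun s => (h s).2⟩
  rintro ⟨k, i⟩
  rcases le_or_gt k N with hk | hk
  · have hrow : PNmat A Bm N (k, i) = p (k, i) := funext (PNmat_eq_of_le hpB hp0 hpA hk i)
    exact hrow ▸ ⟨hp.1 _, hp.2 _⟩
  obtain ⟨n, rfl⟩ : ∃ n, k = N + n := ⟨k - N, by omega⟩
  have hshift : Function.Injective fun t : S d => (t.1 + n, t.2) :=
    (add_left_injective n).prodMap Function.injective_id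
  have hcomp : (PNmat A Bm N (N + n, i) ∘ fun t : S d => (t.1 + n, t.2)) = p (N, i) :=
    funext fun t => PNmat_add_add hN hp0 hpA n t.1 i t.2
  have hout : ∀ t ∉ Set.range fun t : S d => (t.1 + n, t.2), PNmat A Bm N (N + n, i) t = 0 := by
    rintro ⟨l, j⟩ ht
    refine PNmat_eq_zero_of_lt (by_contra fun hl => ht ⟨(l - n, j), ?_⟩) i j
    simp only [Prod.mk.injEq, and_true]; omega
  refine ⟨fun t => ?_, (hshift.hasSum_iff hout).1 (hcomp ▸ hp.2 (N, i))⟩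
  by_cases ht : t ∈ Set.range fun t : S d => (t.1 + n, t.2)
  · obtain ⟨t, rfl⟩ := ht
    exact (congrFun hcomp t).ge.trans' (hp.1 _ _)
  · exact (hout t ht).ge

lemma matpow_PNmat_eq_convZ (hPN : IsStochastic (PNmat A Bm N)) (m : ℕ) {k : ℕ} (hk : m * N < k)
    (l : ℕ) (i j : Fin d) :
    matpow (PNmat A Bm N) m (k, i) (l, j) = convZ (ANfam A N) m ((l : ℤ) - k) i j := by
  induction m generalizing l j with
  | zero =>
    simp only [matpow, convZ, Prod.mk.injEq, sub_eq_zero, Nat.cast_inj, eq_comm]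
  | succ m ih =>
    have hmk : m * N < k := lt_of_le_of_lt (Nat.mul_le_mul_right N m.le_succ) hk
    set G : ℤ → ℝ := fun v => ∑ r, convZ (ANfam A N) m (v - k) i r * ANfam A N (l - v) r j
    have hterm : ∀ (u : ℕ) (r : Fin d), matpow (PNmat A Bm N) m (k, i) (u, r) *
        PNmat A Bm N (u, r) (l, j) = convZ (ANfam A N) m ((u : ℤ) - k) i r *
          ANfam A N ((l : ℤ) - u) r j := fun u r => by
      rw [ih hmk]
      by_cases hu : (u : ℤ) - k < -((m * N : ℕ) : ℤ)
      · rw [convZ_eq_zero_of_lt (fun _ => ANfam_eq_zero_of_lt) m hu, zero_mul, zero_mul]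
      · rw [PNmat_eq_ANfam (by push_cast at hu hk; nlinarith)]
    have hsum := (hPN.matpow m).summable_mul_apply hPN (k, i) (l, j)
    calc matpow (PNmat A Bm N) (m + 1) (k, i) (l, j)
        = ∑' u : ℕ, G u := by
          refine (hsum.tsum_prod' fun u => hsum.comp_injective (Prod.mk_right_injective u)).trans ?_
          exact tsum_congr fun u =>
            (tsum_fintype _).trans (Finset.sum_congr rfl fun r _ => hterm u r)
      _ = ∑' v : ℤ, G v := by
          refine Nat.cast_injective.tsum_eq fun v hv => ?_
          refine ⟨v.toNat, Int.toNat_of_nonneg (not_lt.1 fun hv0 => hv ?_)⟩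
          refine Finset.sum_eq_zero fun r _ => ?_
          rw [convZ_eq_zero_of_lt (fun _ => ANfam_eq_zero_of_lt) m
            (by push_cast at hmk ⊢; omega), zero_mul]
      _ = ∑' w : ℤ, G (l - w) := ((Equiv.subLeft (l : ℤ)).tsum_eq G).symm
      _ = _ := tsum_congr fun w => Finset.sum_congr rfl fun r _ => by
          simp only [sub_sub_cancel, sub_right_comm]

lemma hasSum_sum_convZ_ANfam (hPN : IsStochastic (PNmat A Bm N)) (M : ℕ) (i : Fin d) :
    HasSum (fun q => ∑ j, convZ (ANfam A N) M q i j) 1 := by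
  have hk : M * N < M * N + 1 := Nat.lt_succ_self _
  have hrow := ((hPN.matpow M).2 (M * N + 1, i)).prod_fiberwise fun l => hasSum_fintype _
  simp only [matpow_PNmat_eq_convZ hPN M hk] at hrow
  refine (hasSum_natCast_sub_iff fun q hq => Finset.sum_eq_zero fun j _ => ?_).1 hrow
  exact convZ_eq_zero_of_lt (fun _ => ANfam_eq_zero_of_lt) M (by push_cast at hq ⊢; omega) i j

end TruncatedChain

theorem _root_.ConvexOn.sub_le_deriv_mul_sub {S : Set ℝ} {f : ℝ → ℝ}
    (hfc : ConvexOn ℝ S f) {x y : ℝ} (hx : x ∈ S) (hy : y ∈ S)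
    (hfd : DifferentiableAt ℝ f y) :
    f y - f x ≤ deriv f y * (y - x) := by
  rcases lt_trichotomy x y with hxy | rfl | hxy
  · have h := hfc.slope_le_deriv hx hy hxy hfd
    rwa [slope_def_field, div_le_iff₀ (sub_pos.2 hxy)] at h
  · simp
  · have h := hfc.deriv_le_slope hy hx hxy hfd
    rw [slope_def_field, le_div_iff₀ (sub_pos.2 hxy)] at h
    linarith

theorem _root_.ConvexOn.deriv_pos_of_strictMonoOn {S : Set ℝ} {f : ℝ → ℝ}
    (hfc : ConvexOn ℝ S f) (hf : StrictMonoOn f S) {a x : ℝ} (ha : a ∈ S) (hx : x ∈ S)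
    (hax : a < x) (hfd : DifferentiableAt ℝ f x) : 0 < deriv f x := by
  have h := hfc.slope_le_deriv ha hx hax hfd
  rw [slope_def_field] at h
  exact (div_pos (sub_pos.2 (hf ha hx hax)) (sub_pos.2 hax)).trans_le h

section Increments

variable {V : ℝ → ℝ}

lemma sub_le_mul_of_nonpos (hVconv : ConvexOn ℝ (Ici 0) V)
    (hVd : ∀ z, 0 < z → DifferentiableAt ℝ V z) (hV' : MonotoneOn (deriv V) (Ioi 0))
    {x z t a : ℝ} (hz : 0 < z) (hzt : z ≤ x + t) (ht : t ≤ 0) (ha : a ≤ deriv V z) :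
    V (x + t) - V x ≤ a * t := by
  have hxt : 0 < x + t := hz.trans_le hzt
  have h := hVconv.sub_le_deriv_mul_sub (x := x) (mem_Ici.2 (by linarith)) hxt.le (hVd _ hxt)
  have h' : a ≤ deriv V (x + t) := ha.trans (hV' hz hxt hzt)
  nlinarith

lemma sub_le_mul_of_nonneg (hVconv : ConvexOn ℝ (Ici 0) V)
    (hVd : ∀ z, 0 < z → DifferentiableAt ℝ V z) (hV' : MonotoneOn (deriv V) (Ioi 0))
    {x y t a : ℝ} (hx : 0 < x) (ht : 0 ≤ t) (hty : x + t ≤ y) (ha : deriv V y ≤ a) :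
    V (x + t) - V x ≤ a * t := by
  have hxt : 0 < x + t := by linarith
  have h := hVconv.sub_le_deriv_mul_sub hx.le hxt.le (hVd _ hxt)
  have h' : deriv V (x + t) ≤ a := (hV' hxt (hxt.trans_le hty) hty).trans ha
  nlinarith

end Increments

section Drift

variable {V : ℝ → ℝ} {c : ℤ → ℝ} {L : ℕ} {κ ε x : ℝ}

lemma neg_le_tsum_mul (hc0 : ∀ q, 0 ≤ c q) (hc1 : HasSum c 1)
    (hcL : ∀ q : ℤ, q < -(L : ℤ) → c q = 0) : -(L : ℝ) ≤ ∑' q : ℤ, q * c q := by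
  by_cases hs : Summable fun q : ℤ => (q : ℝ) * c q
  · calc -(L : ℝ) = ∑' q : ℤ, -(L : ℝ) * c q := by rw [tsum_mul_left, hc1.tsum_eq, mul_one]
      _ ≤ ∑' q : ℤ, q * c q := (hc1.summable.mul_left _).tsum_le_tsum (fun q => ?_) hs
    rcases lt_or_ge q (-(L : ℤ)) with hq | hq
    · simp [hcL q hq]
    · exact mul_le_mul_of_nonneg_right (by exact_mod_cast hq) (hc0 q)
  · rw [tsum_eq_zero_of_not_summable hs]
    exact neg_nonpos.2 L.cast_nonneg

lemma two_mul_le_of_moment_le (hc0 : ∀ q, 0 ≤ c q) (hc1 : HasSum c 1)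
    (hcL : ∀ q : ℤ, q < -(L : ℤ) → c q = 0) (hε0 : 0 ≤ ε) (hε1 : ε ≤ 1)
    (h1 : (1 - ε) * ∑' q : ℤ, q * c q + 2 * ε * ∑' n : ℕ, n * c n ≤ -(2 * κ)) :
    2 * κ ≤ (1 - ε) * L := by
  have hneg := mul_le_mul_of_nonneg_left (neg_le_tsum_mul hc0 hc1 hcL) (sub_nonneg.2 hε1)
  have hpos : 0 ≤ ∑' n : ℕ, (n : ℝ) * c n :=
    tsum_nonneg fun n => mul_nonneg n.cast_nonneg (hc0 n)
  nlinarith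

/-- Used when `∑' q, c q * V (x + q)` diverges, so that this `tsum` is `0`. -/
lemma mul_deriv_le_self (hV0 : ∀ z, 0 ≤ z → 0 ≤ V z) (hVconv : ConvexOn ℝ (Ici 0) V)
    (hVd : ∀ z, 0 < z → DifferentiableAt ℝ V z) (hLx : (L : ℝ) < x)
    (hκ : 0 < κ) (hdV : 0 ≤ deriv V x) (hκL : 2 * κ ≤ (1 - ε) * L)
    (h2 : (1 - ε) * deriv V x ≤ deriv V (x - L)) : κ * deriv V x ≤ V x := by
  have hxL : 0 < x - L := sub_pos.2 hLx
  have htan := hVconv.sub_le_deriv_mul_sub (x := x) (mem_Ici.2 (by linarith)) hxL.le (hVd _ hxL)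
  have hL := mul_le_mul_of_nonneg_left h2 (L.cast_nonneg (α := ℝ))
  have hκ' := mul_le_mul_of_nonneg_right hκL hdV
  nlinarith [hV0 _ hxL.le]

/-- If `∑ n c n` diverged, both series in `h1` would be `0`. -/
lemma summable_natCast_mul_of_moment_le (hκ : 0 < κ)
    (h1 : (1 - ε) * ∑' q : ℤ, q * c q + 2 * ε * ∑' n : ℕ, n * c n ≤ -(2 * κ)) :
    Summable fun n : ℕ => (n : ℝ) * c n := by
  by_contra ha
  have hf : ¬Summable fun q : ℤ => (q : ℝ) * c q := fun hf =>
    ha (by simpa [Function.comp_def] using hf.comp_injective Nat.cast_injective)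
  rw [tsum_eq_zero_of_not_summable ha, tsum_eq_zero_of_not_summable hf] at h1
  linarith

lemma tsum_nat_mul_sub_le (hV0 : ∀ z, 0 ≤ z → 0 ≤ V z) (hVconv : ConvexOn ℝ (Ici 0) V)
    (hVd : ∀ z, 0 < z → DifferentiableAt ℝ V z) (hV' : MonotoneOn (deriv V) (Ioi 0))
    (hc0 : ∀ q, 0 ≤ c q) {y : ℝ} {T : ℤ} (hx : 0 < x) (hTy : x + T ≤ y) (hε0 : 0 ≤ ε)
    (hdV : 0 ≤ deriv V x) (h2 : deriv V y ≤ (1 + ε) * deriv V x)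
    (hc : Summable fun n : ℕ => c n) (hs : Summable fun n : ℕ => c n * V (x + n))
    (ha : Summable fun n : ℕ => n * c n) :
    ∑' n : ℕ, c n * (V (x + n) - V x) ≤ (1 + ε) * deriv V x * ∑' n : ℕ, n * c n
      + ∑' n : ℕ, (if T < n then V (x + n) * c n else 0) := by
  have hVx := hV0 x hx.le
  have htail : Summable fun n : ℕ => if T < n then V (x + n) * c n else 0 := by
    refine Summable.of_nonneg_of_le (fun n => ?_) (fun n => ?_) hs
    all_goals
      have := mul_nonneg (hV0 (x + n) (by positivity)) (hc0 n)
      split_ifs <;> linarith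
  have hD : Summable fun n : ℕ => c n * (V (x + n) - V x) :=
    (hs.sub (hc.mul_right (V x))).congr fun n => (mul_sub _ _ _).symm
  rw [← tsum_mul_left, ← (ha.mul_left _).tsum_add htail]
  refine hD.tsum_le_tsum (fun n => ?_) ((ha.mul_left _).add htail)
  have hcn := hc0 n
  split_ifs with hn
  · have : 0 ≤ (1 + ε) * deriv V x * (n * c n) := by positivity
    nlinarith
  · have hnT : x + n ≤ y := by
      have : (n : ℝ) ≤ T := by exact_mod_cast not_lt.1 hn
      linarith
    have := sub_le_mul_of_nonneg hVconv hVd hV' hx n.cast_nonneg hnT h2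
    nlinarith [mul_le_mul_of_nonneg_left this hcn]

lemma tsum_negSucc_mul_sub_le (hVconv : ConvexOn ℝ (Ici 0) V)
    (hVd : ∀ z, 0 < z → DifferentiableAt ℝ V z) (hV' : MonotoneOn (deriv V) (Ioi 0))
    (hc0 : ∀ q, 0 ≤ c q) (hcL : ∀ q : ℤ, q < -(L : ℤ) → c q = 0) (hLx : (L : ℝ) < x)
    (h2 : (1 - ε) * deriv V x ≤ deriv V (x - L)) :
    ∑' n : ℕ, c (-((n : ℤ) + 1)) * (V (x + ((-((n : ℤ) + 1) : ℤ) : ℝ)) - V x) ≤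
      (1 - ε) * deriv V x *
        ∑' n : ℕ, ((-((n : ℤ) + 1) : ℤ) : ℝ) * c (-((n : ℤ) + 1)) := by
  have hsupp : ∀ n ∉ Finset.range L, c (-((n : ℤ) + 1)) = 0 := fun n hn =>
    hcL _ (by simp only [Finset.mem_range, not_lt] at hn; omega)
  rw [← tsum_mul_left]
  refine Summable.tsum_le_tsum (fun n => ?_)
    (summable_of_ne_finset_zero fun n hn => by rw [hsupp n hn, zero_mul])
    (summable_of_ne_finset_zero fun n hn => by rw [hsupp n hn, mul_zero, mul_zero])
  rcases lt_or_ge (-((n : ℤ) + 1)) (-(L : ℤ)) with hn | hn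
  · simp only [hcL _ hn]; simp
  have hnL : x - L ≤ x + ((-((n : ℤ) + 1) : ℤ) : ℝ) := by
    have : -(L : ℝ) ≤ ((-((n : ℤ) + 1) : ℤ) : ℝ) := by exact_mod_cast hn
    linarith
  have := sub_le_mul_of_nonpos hVconv hVd hV' (sub_pos.2 hLx) hnL (by push_cast; linarith) h2
  nlinarith [mul_le_mul_of_nonneg_left this (hc0 (-((n : ℤ) + 1)))]

theorem tsum_mul_sub_le_neg_mul_deriv (hV0 : ∀ z, 0 ≤ z → 0 ≤ V z)
    (hVconv : ConvexOn ℝ (Ici 0) V) (hVd : ∀ z, 0 < z → DifferentiableAt ℝ V z)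
    (hV' : MonotoneOn (deriv V) (Ioi 0))
    (hc0 : ∀ q, 0 ≤ c q) (hc1 : HasSum c 1) (hcL : ∀ q : ℤ, q < -(L : ℤ) → c q = 0)
    {y : ℝ} {T : ℤ} (hLx : (L : ℝ) < x) (hTy : x + T ≤ y)
    (hκ : 0 < κ) (hε0 : 0 ≤ ε) (hε1 : ε ≤ 1) (hdV : 0 ≤ deriv V x)
    (h1 : (1 - ε) * ∑' q : ℤ, q * c q + 2 * ε * ∑' n : ℕ, n * c n ≤ -(2 * κ))
    (h2 : deriv V y ≤ (1 + ε) * deriv V x ∧ (1 - ε) * deriv V x ≤ deriv V (x - L))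
    (h3 : ∑' n : ℕ, (if T < n then V (x + n) * c n else 0) ≤ κ * deriv V x) :
    ∑' q : ℤ, c q * V (x + q) - V x ≤ -(κ * deriv V x) := by
  have hx : 0 < x := L.cast_nonneg.trans_lt hLx
  by_cases hs : Summable fun q : ℤ => c q * V (x + q)
  swap
  · rw [tsum_eq_zero_of_not_summable hs]
    linarith [mul_deriv_le_self hV0 hVconv hVd hLx hκ hdV
      (two_mul_le_of_moment_le hc0 hc1 hcL hε0 hε1 h1) h2.2]
  have hnegSucc : Function.Injective fun n : ℕ => -((n : ℤ) + 1) := fun _ _ h => by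
    simpa using h
  have ha := summable_natCast_mul_of_moment_le hκ h1
  have hb : Summable fun n : ℕ => ((-((n : ℤ) + 1) : ℤ) : ℝ) * c (-((n : ℤ) + 1)) :=
    summable_of_ne_finset_zero (s := Finset.range L) fun n hn => by
      rw [hcL _ (by simp only [Finset.mem_range, not_lt] at hn; omega), mul_zero]
  have hqc := tsum_of_nat_of_neg_add_one (f := fun q : ℤ => (q : ℝ) * c q)
    (by simpa using ha) hb
  have hD : Summable fun q : ℤ => c q * (V (x + q) - V x) :=
    (hs.sub (hc1.summable.mul_right (V x))).congr fun q => (mul_sub _ _ _).symm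
  have hsplit := tsum_of_nat_of_neg_add_one (f := fun q : ℤ => c q * (V (x + q) - V x))
    (hD.comp_injective Nat.cast_injective) (hD.comp_injective hnegSucc)
  simp only [Int.cast_natCast] at hqc hsplit
  have hpos := tsum_nat_mul_sub_le hV0 hVconv hVd hV' hc0 hx hTy hε0 hdV h2.1
    (hc1.summable.comp_injective Nat.cast_injective)
    (by simpa [Function.comp_def] using hs.comp_injective Nat.cast_injective) ha
  have hneg := tsum_negSucc_mul_sub_le hVconv hVd hV' hc0 hcL hLx h2.2
  have hdiff : ∑' q : ℤ, c q * V (x + q) - V x = ∑' q : ℤ, c q * (V (x + q) - V x) := by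
    simp_rw [mul_sub]
    rw [hs.tsum_sub (hc1.summable.mul_right _), tsum_mul_right, hc1.tsum_eq, one_mul]
  rw [hqc] at h1
  rw [hdiff, hsplit]
  have := mul_le_mul_of_nonneg_right h1 hdV
  linarith

end Drift

theorem gig1_drift_inequality_general (d : ℕ)
    (A : ℤ → Fin d → Fin d → ℝ) (Bm : ℕ → Fin d → Fin d → ℝ)
    (hAnn : ∀ k i j, 0 ≤ A k i j)
    -- the GI/G/1-type transition probability matrix P
    (p : S d → S d → ℝ)
    (hpB : ∀ (l : ℕ) (i j : Fin d), p (0, i) (l, j) = Bm l i j)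
    (hp0 : ∀ (k : ℕ) (i j : Fin d),
      p (k + 1, i) (0, j) = ∑' m : ℕ, A (-((k : ℤ) + 1) - (m : ℤ)) i j)
    (hpA : ∀ (k l : ℕ) (i j : Fin d),
      p (k + 1, i) (l + 1, j) = A ((l : ℤ) - (k : ℤ)) i j)
    (hp : IsStochastic p)
    (N : ℕ) (hN : 1 ≤ N)
    (M : ℕ)
    -- the function V
    (α : ℝ)
    (V : ℝ → ℝ) (hV1 : ∀ x : ℝ, 0 ≤ x → 1 ≤ V x)
    (hVmono : StrictMonoOn V (Ici 0)) (hVconv : ConvexOn ℝ (Ici 0) V)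
    (hVd1 : ∀ x : ℝ, 0 < x → DifferentiableAt ℝ V x)
    (hV'mono : MonotoneOn (deriv V) (Ioi 0))
    -- the fixed constants and conditions (1)–(3)
    (κ ε δ0 : ℝ) (hκ : 0 < κ) (hε0 : 0 < ε) (hε1 : ε < 1)
    (K0 K : ℕ) (hK0 : M * N ≤ K0) (hK : K0 ≤ K)
    (h1 : ∀ i : Fin d,
      (1 - ε) * (∑' l : ℤ, if -((M * N : ℕ) : ℤ) ≤ l then
          (l : ℝ) * ∑ j : Fin d, convZ (ANfam A N) M l i j else 0)
        + 2 * ε * (∑' l : ℕ, (l : ℝ) * ∑ j : Fin d, convZ (ANfam A N) M (l : ℤ) i j)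
        ≤ -(2 * κ))
    (h2 : ∀ k : ℕ, K0 + 1 ≤ k →
      deriv V ((k : ℝ) + δ0 * (k : ℝ) ^ (1 - α)) ≤ (1 + ε) * deriv V (k : ℝ) ∧
      (1 - ε) * deriv V (k : ℝ) ≤ deriv V ((k : ℝ) - ((M * N : ℕ) : ℝ)))
    (h3 : ∀ k : ℕ, K + 1 ≤ k → ∀ i : Fin d,
      (deriv V (k : ℝ))⁻¹ *
          (∑' l : ℕ, if Int.floor (δ0 * (k : ℝ) ^ (1 - α)) < (l : ℤ) then
            V ((k : ℝ) + (l : ℝ)) * ∑ j : Fin d, convZ (ANfam A N) M (l : ℤ) i j else 0)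
        ≤ κ) :
    ∀ k : ℕ, K + 1 ≤ k → ∀ i : Fin d,
      (∑' l : ℕ, (∑ j : Fin d, matpow (PNmat A Bm N) M (k, i) (l, j)) * V (l : ℝ))
          - V (k : ℝ)
        ≤ -(κ * deriv V (k : ℝ)) := by
  intro k hk i
  have hPN := isStochastic_PNmat hN hpB hp0 hpA hp
  have hkL : M * N < k := by omega
  have hk0 : (0 : ℝ) < k := by exact_mod_cast (by omega : 0 < k)
  have hdV : 0 < deriv V k :=
    hVconv.deriv_pos_of_strictMonoOn hVmono self_mem_Ici hk0.le hk0 (hVd1 _ hk0)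
  set c : ℤ → ℝ := fun q => ∑ j, convZ (ANfam A N) M q i j
  have hcL : ∀ q : ℤ, q < -((M * N : ℕ) : ℤ) → c q = 0 := fun q hq =>
    Finset.sum_eq_zero fun j _ => convZ_eq_zero_of_lt (fun _ => ANfam_eq_zero_of_lt) M hq i j
  have hrow : ∑' l : ℕ, (∑ j, matpow (PNmat A Bm N) M (k, i) (l, j)) * V l
      = ∑' q : ℤ, c q * V (k + q) := by
    simp only [matpow_PNmat_eq_convZ hPN M hkL]
    rw [← tsum_natCast_sub (k := k) fun q hq => by
      rw [hcL q (by push_cast at hkL ⊢; omega), zero_mul]]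
    simp [c]
  rw [hrow]
  refine tsum_mul_sub_le_neg_mul_deriv (fun z hz => zero_le_one.trans (hV1 z hz)) hVconv hVd1
    hV'mono
    (fun q => Finset.sum_nonneg fun j _ => convZ_nonneg (ANfam_nonneg hAnn) M q i j)
    (hasSum_sum_convZ_ANfam hPN M i) hcL (by exact_mod_cast hkL)
    (T := ⌊δ0 * (k : ℝ) ^ (1 - α)⌋)
    (by linarith [Int.floor_le (δ0 * (k : ℝ) ^ (1 - α))])
    hκ hε0.le hε1.le hdV.le ?_ (h2 k (by omega)) ?_
  · convert h1 i using 3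
    refine tsum_congr fun q => ?_
    split_ifs with hq
    · rfl
    · exact mul_eq_zero_of_right _ (hcL q (not_le.1 hq))
  · rw [mul_comm κ]
    exact (inv_mul_le_iff₀ hdV).1 (h3 k hk i)

/-- Lemma 5.5: under the GI/G/1-type setup with `σ < 0`,
`σ_N < 0`, `L = MN`, and constants `κ, ε, δ0, K0, K` satisfying conditions
(1)–(3), one has, componentwise for all `k ≥ K + 1`,
`Σ_ℓ P_N^M(k;ℓ) V(ℓ) e − V(k) e ≤ −κ V'(k) e`. -/
theorem gig1_drift_inequality (d : ℕ) (hd : 0 < d)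
    (A : ℤ → Fin d → Fin d → ℝ) (Bm : ℕ → Fin d → Fin d → ℝ)
    (hAnn : ∀ k i j, 0 ≤ A k i j) (hBnn : ∀ l i j, 0 ≤ Bm l i j)
    -- the GI/G/1-type transition probability matrix P
    (p : S d → S d → ℝ)
    (hpB : ∀ (l : ℕ) (i j : Fin d), p (0, i) (l, j) = Bm l i j)
    (hp0 : ∀ (k : ℕ) (i j : Fin d),
      p (k + 1, i) (0, j) = ∑' m : ℕ, A (-((k : ℤ) + 1) - (m : ℤ)) i j)
    (hpA : ∀ (k l : ℕ) (i j : Fin d),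
      p (k + 1, i) (l + 1, j) = A ((l : ℤ) - (k : ℤ)) i j)
    (hp : IsStochastic p) (hbm : BlockMonotone p) (hirr : ChainIrreducible p)
    -- A is an irreducible stochastic matrix with unique stationary vector ϖ
    (Asum : Fin d → Fin d → ℝ) (hAsum : ∀ i j, Asum i j = ∑' k : ℤ, A k i j)
    (hAstoch : ∀ i, (∑ j : Fin d, Asum i j) = 1)
    (hAirr : ∀ i j, ∃ n : ℕ, 0 < finMatPow Asum n i j)
    (ϖ : Fin d → ℝ) (hϖnn : ∀ i, 0 ≤ ϖ i) (hϖ1 : (∑ i : Fin d, ϖ i) = 1)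
    (hϖstat : ∀ j, (∑ i : Fin d, ϖ i * Asum i j) = ϖ j)
    (hϖuniq : ∀ ϖ' : Fin d → ℝ, (∀ i, 0 ≤ ϖ' i) → (∑ i : Fin d, ϖ' i) = 1 →
        (∀ j, (∑ i : Fin d, ϖ' i * Asum i j) = ϖ' j) → ϖ' = ϖ)
    -- σ < 0 and σ_N < 0
    (hσ : (∑ i : Fin d, ϖ i * ∑' k : ℤ, (k : ℝ) * ∑ j : Fin d, A k i j) < 0)
    (N : ℕ) (hN : 1 ≤ N)
    (hσN : (∑ i : Fin d, ϖ i * ∑' k : ℤ, (k : ℝ) * ∑ j : Fin d, ANfam A N k i j) < 0)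
    (M : ℕ) (hM : 1 ≤ M)
    -- the function V
    (α : ℝ) (hα0 : 0 ≤ α) (hα1 : α < 1)
    (V : ℝ → ℝ) (hV1 : ∀ x : ℝ, 0 ≤ x → 1 ≤ V x)
    (hVmono : StrictMonoOn V (Ici 0)) (hVconv : ConvexOn ℝ (Ici 0) V)
    (hVd1 : ∀ x : ℝ, 0 < x → DifferentiableAt ℝ V x)
    (hVd2 : ∀ x : ℝ, 0 < x → DifferentiableAt ℝ (deriv V) x)
    (hV'mono : MonotoneOn (deriv V) (Ioi 0))
    -- the fixed constants and conditions (1)–(3)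
    (κ ε δ0 : ℝ) (hκ : 0 < κ) (hε0 : 0 < ε) (hε1 : ε < 1) (hδ0 : 0 < δ0)
    (K0 K : ℕ) (hK0 : M * N ≤ K0) (hK : K0 ≤ K)
    (h1 : ∀ i : Fin d,
      (1 - ε) * (∑' l : ℤ, if -((M * N : ℕ) : ℤ) ≤ l then
          (l : ℝ) * ∑ j : Fin d, convZ (ANfam A N) M l i j else 0)
        + 2 * ε * (∑' l : ℕ, (l : ℝ) * ∑ j : Fin d, convZ (ANfam A N) M (l : ℤ) i j)
        ≤ -(2 * κ))
    (h2 : ∀ k : ℕ, K0 + 1 ≤ k →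
      deriv V ((k : ℝ) + δ0 * (k : ℝ) ^ (1 - α)) ≤ (1 + ε) * deriv V (k : ℝ) ∧
      (1 - ε) * deriv V (k : ℝ) ≤ deriv V ((k : ℝ) - ((M * N : ℕ) : ℝ)))
    (h3 : ∀ k : ℕ, K + 1 ≤ k → ∀ i : Fin d,
      (deriv V (k : ℝ))⁻¹ *
          (∑' l : ℕ, if Int.floor (δ0 * (k : ℝ) ^ (1 - α)) < (l : ℤ) then
            V ((k : ℝ) + (l : ℝ)) * ∑ j : Fin d, convZ (ANfam A N) M (l : ℤ) i j else 0)
        ≤ κ) :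
    ∀ k : ℕ, K + 1 ≤ k → ∀ i : Fin d,
      (∑' l : ℕ, (∑ j : Fin d, matpow (PNmat A Bm N) M (k, i) (l, j)) * V (l : ℝ))
          - V (k : ℝ)
        ≤ -(κ * deriv V (k : ℝ)) :=
  gig1_drift_inequality_general d A Bm hAnn p hpB hp0 hpA hp N hN M α V hV1 hVmono hVconv hVd1
    hV'mono κ ε δ0 hκ hε0 hε1 K0 K hK0 hK h1 h2 h3

end MasuTrunc
end

section
/- Let α ∈ [0,1), d ≥ 1, and let {C(ℓ); ℓ ≥ 0} be d×d nonnegative matrices. Let V : [0,∞) → [1,∞) be an increasing, convex, log-concave, differentiable function with V'(0+) > 0. Suppose that for every δ > 0 at least one of the following holds: (I) lim_{k→∞} (V(k)/V'(k))·Σ_{ℓ=⌊δk^{1−α}⌋+1}^{∞} V(ℓ)·C(ℓ)·e = 0 componentwise; or (II) limsup_{ℓ→∞} V(δℓ)/V(ℓ) < ∞ and Σ_{ℓ=0}^{∞} V(ℓ^{1/(1−α)})·C(ℓ)·e is componentwise finite. Then for every δ > 0, lim_{k→∞} (1/V'(k))·Σ_{ℓ=⌊δk^{1−α}⌋+1}^{∞}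 V(k+ℓ)·C(ℓ)·e = 0 componentwise. -/
/-!
Write `f = log ∘ V`; it is concave with `f 0 ≥ 0`, so its increments `f (s + h) - f s` decrease in
`s`, and convexity of `V` gives `V' ≥ c` on `(0, ∞)`.

Under (I), decreasing increments give `V (k + ℓ) ≤ V k * V ℓ`, so the sum is dominated by the one
in (I).

Under (II), let `s ≥ δ' K` and `x = min u (δ' K)` with `u = V K / V' K = 1 / f' K`. Decreasing
increments and the tangent of `f` at `K` give `f (K + s) - f s ≤ f (K + x) - f x ≤ f K + 1 - f x`,
i.e. `V (K + s) ≤ e * (u / V x) * V' K * V s`; and `u / V x` is bounded because `V x ≥ c x / 2`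
while `u ≤ K + V 0 / c`. Taking `s = ℓ ^ (1 / (1 - α))` and `δ' = δ ^ (1 / (1 - α))` dominates the
terms by a multiple of the summable sequence of (II), and Tannery's theorem concludes.
-/

open Filter Set Topology

namespace ConvexOn

variable {S : Set ℝ} {f : ℝ → ℝ} {x y f' : ℝ}

lemma add_mul_sub_le (hf : ConvexOn ℝ S f) (hx : x ∈ S) (hy : y ∈ S) (hf' : HasDerivAt f f' y) :
    f y + f' * (x - y) ≤ f x := by
  rcases lt_trichotomy x y with hxy | rfl | hyx
  · have h := hf.slope_le_of_hasDerivAt hx hy hxy hf'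
    rw [slope_def_field, div_le_iff₀ (sub_pos.2 hxy)] at h
    nlinarith
  · simp
  · have h := hf.le_slope_of_hasDerivAt hy hx hyx hf'
    rw [slope_def_field, le_div_iff₀ (sub_pos.2 hyx)] at h
    linarith

lemma le_deriv_of_tendsto_nhdsGT {a c : ℝ} (hf : ConvexOn ℝ (Ioi a) f)
    (hfd : ∀ x ∈ Ioi a, DifferentiableAt ℝ f x) (hlim : Tendsto (deriv f) (𝓝[>] a) (𝓝 c))
    (hx : a < x) : c ≤ deriv f x :=
  le_of_tendsto hlim <| by
    filter_upwards [Ioo_mem_nhdsGT hx] with y hy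
    exact hf.monotoneOn_deriv hfd hy.1 hx hy.2.le

end ConvexOn

namespace ConcaveOn

variable {S : Set ℝ} {f : ℝ → ℝ} {x y f' : ℝ}

lemma le_add_mul_sub (hf : ConcaveOn ℝ S f) (hx : x ∈ S) (hy : y ∈ S) (hf' : HasDerivAt f f' y) :
    f x ≤ f y + f' * (x - y) := by
  have := hf.neg.add_mul_sub_le hx hy hf'.neg
  simp only [Pi.neg_apply] at this
  linarith

lemma add_sub_le_add_sub (hf : ConcaveOn ℝ S f) {s h : ℝ} (hx : x ∈ S) (hsh : s + h ∈ S)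
    (hxs : x ≤ s) (hh : 0 ≤ h) : f (s + h) - f s ≤ f (x + h) - f x := by
  rcases hh.eq_or_lt with rfl | hh
  · simp
  set t := s + h - x
  have ht : 0 < t := by linarith
  have hs : (h / t) • x + ((s - x) / t) • (s + h) = s := by
    simp only [smul_eq_mul]; field_simp; ring
  have hxh : ((s - x) / t) • x + (h / t) • (s + h) = x + h := by
    simp only [smul_eq_mul]; field_simp; ring
  have hsum : h / t + (s - x) / t = 1 := by field_simp; ring
  have h₁ := hf.2 hx hsh (by positivity) (div_nonneg (sub_nonneg.2 hxs) ht.le) hsum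
  have h₂ := hf.2 hx hsh (div_nonneg (sub_nonneg.2 hxs) ht.le) (by positivity : 0 ≤ h / t)
    (by rw [add_comm, hsum])
  rw [hs] at h₁
  rw [hxh] at h₂
  simp only [smul_eq_mul] at h₁ h₂
  have e₁ : h / t * f x + (s - x) / t * f x = f x := by rw [← add_mul, hsum, one_mul]
  have e₂ : (s - x) / t * f (s + h) + h / t * f (s + h) = f (s + h) := by
    rw [← add_mul, add_comm, hsum, one_mul]
  linarith

end ConcaveOn

section GrowthBounds

variable {V : ℝ → ℝ}

lemma map_add_le_mul_of_concaveOn_log (hV1 : ∀ x : ℝ, 0 ≤ x → 1 ≤ V x)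
    (hVlc : ConcaveOn ℝ (Ici 0) (fun x : ℝ => Real.log (V x))) {x y : ℝ} (hx : 0 ≤ x)
    (hy : 0 ≤ y) : V (x + y) ≤ V x * V y := by
  have hpos : ∀ z, 0 ≤ z → 0 < V z := fun z hz => one_pos.trans_le (hV1 z hz)
  have h := hVlc.add_sub_le_add_sub (s := y) (h := x) self_mem_Ici
    (mem_Ici.2 (add_nonneg hy hx)) hy hx
  have hV0 : 0 ≤ Real.log (V 0) := Real.log_nonneg (hV1 0 le_rfl)
  rw [add_comm y, zero_add] at h
  rw [← Real.log_le_log_iff (hpos _ (add_nonneg hx hy)) (mul_pos (hpos x hx) (hpos y hy)),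
    Real.log_mul (hpos x hx).ne' (hpos y hy).ne']
  linarith

lemma map_add_mul_le_exp_one_mul (hV1 : ∀ x : ℝ, 0 ≤ x → 1 ≤ V x)
    (hVlc : ConcaveOn ℝ (Ici 0) (fun x : ℝ => Real.log (V x)))
    (hVd1 : ∀ x : ℝ, 0 < x → DifferentiableAt ℝ V x) {K s x : ℝ} (hK : 0 < K) (hx : 0 ≤ x)
    (hxs : x ≤ s) (hxK : x * deriv V K ≤ V K) :
    V (K + s) * V x ≤ Real.exp 1 * V K * V s := by
  have hpos : ∀ z, 0 ≤ z → 0 < V z := fun z hz => one_pos.trans_le (hV1 z hz)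
  have hVK := hpos K hK.le
  have hs := hpos s (hx.trans hxs)
  have hincr := hVlc.add_sub_le_add_sub (s := s) (h := K) hx (mem_Ici.2 (by linarith)) hxs hK.le
  have htangent := hVlc.le_add_mul_sub (x := x + K) (mem_Ici.2 (by linarith)) (mem_Ici.2 hK.le)
    ((hVd1 K hK).hasDerivAt.log hVK.ne')
  have hslope : deriv V K / V K * x ≤ 1 := by
    rwa [div_mul_eq_mul_div, div_le_one hVK, mul_comm]
  rw [add_sub_cancel_right] at htangent
  rw [← Real.log_le_log_iff (mul_pos (hpos _ (by linarith)) (hpos x hx)) (by positivity),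
    Real.log_mul (hpos _ (by linarith)).ne' (hpos x hx).ne', Real.log_mul (by positivity) hs.ne',
    Real.log_mul (by positivity) hVK.ne', Real.log_exp, add_comm K s]
  linarith

variable {c : ℝ}

lemma mul_div_two_le_of_le_deriv (hV1 : ∀ x : ℝ, 0 ≤ x → 1 ≤ V x)
    (hVconv : ConvexOn ℝ (Ici 0) V) (hVd1 : ∀ x : ℝ, 0 < x → DifferentiableAt ℝ V x)
    (hcd : ∀ x : ℝ, 0 < x → c ≤ deriv V x) {y : ℝ} (hy : 0 < y) : c * y / 2 ≤ V y := by
  have h := hVconv.add_mul_sub_le hy.le (by positivity : (0 : ℝ) ≤ y / 2)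
    (hVd1 _ (half_pos hy)).hasDerivAt
  have := hV1 (y / 2) (by positivity)
  nlinarith [hcd _ (half_pos hy)]

lemma div_deriv_le_add (hV1 : ∀ x : ℝ, 0 ≤ x → 1 ≤ V x) (hVconv : ConvexOn ℝ (Ici 0) V)
    (hVd1 : ∀ x : ℝ, 0 < x → DifferentiableAt ℝ V x) (hc : 0 < c)
    (hcd : ∀ x : ℝ, 0 < x → c ≤ deriv V x) {K : ℝ} (hK : 0 < K) :
    V K / deriv V K ≤ K + V 0 / c := by
  have hdK : 0 < deriv V K := hc.trans_le (hcd K hK)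
  have htangent := hVconv.add_mul_sub_le self_mem_Ici hK.le (hVd1 K hK).hasDerivAt
  have hV0 : V 0 ≤ V 0 / c * deriv V K := by
    rw [div_mul_eq_mul_div, le_div_iff₀ hc]
    exact mul_le_mul_of_nonneg_left (hcd K hK) (zero_le_one.trans (hV1 0 le_rfl))
  rw [div_le_iff₀ hdK]
  nlinarith

lemma div_map_min_le (hV1 : ∀ x : ℝ, 0 ≤ x → 1 ≤ V x) (hVconv : ConvexOn ℝ (Ici 0) V)
    (hVd1 : ∀ x : ℝ, 0 < x → DifferentiableAt ℝ V x) (hc : 0 < c)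
    (hcd : ∀ x : ℝ, 0 < x → c ≤ deriv V x) {δ K u : ℝ} (hδ : 0 < δ) (hK : 0 < K) (hu : 0 < u)
    (huK : u ≤ K + V 0 / c) :
    u / V (min u (δ * K)) ≤ 2 / c + 2 / (c * δ) + V 0 / c := by
  have hpos : ∀ z, 0 ≤ z → 0 < V z := fun z hz => one_pos.trans_le (hV1 z hz)
  have hB₂ : 0 ≤ 2 / (c * δ) := by positivity
  have hB₃ : 0 ≤ V 0 / c := div_nonneg (hpos 0 le_rfl).le hc.le
  rcases le_total u (δ * K) with h | h
  · have hVu := hpos u hu.le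
    have hu2 : c * u / 2 ≤ V u := mul_div_two_le_of_le_deriv hV1 hVconv hVd1 hcd hu
    have : u / V u ≤ 2 / c := by rw [div_le_div_iff₀ hVu hc]; linarith
    rw [min_eq_left h]
    linarith
  · have hVδ := hpos (δ * K) (by positivity)
    have hδK : c * δ * K / 2 ≤ V (δ * K) := by
      simpa only [mul_assoc] using mul_div_two_le_of_le_deriv hV1 hVconv hVd1 hcd (by positivity)
    calc u / V (min u (δ * K)) ≤ (K + V 0 / c) / V (δ * K) := by
          rw [min_eq_right h]; exact div_le_div_of_nonneg_right huK hVδ.le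
      _ = K / V (δ * K) + V 0 / c / V (δ * K) := add_div _ _ _
      _ ≤ 2 / (c * δ) + V 0 / c := by
          refine add_le_add ?_ (div_le_self hB₃ (hV1 _ (by positivity)))
          rw [div_le_div_iff₀ hVδ (by positivity)]
          linarith
      _ ≤ _ := by linarith [show 0 ≤ 2 / c by positivity]

lemma map_add_le_mul_deriv_mul (hV1 : ∀ x : ℝ, 0 ≤ x → 1 ≤ V x)
    (hVconv : ConvexOn ℝ (Ici 0) V) (hVlc : ConcaveOn ℝ (Ici 0) (fun x : ℝ => Real.log (V x)))
    (hVd1 : ∀ x : ℝ, 0 < x → DifferentiableAt ℝ V x) (hc : 0 < c)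
    (hcd : ∀ x : ℝ, 0 < x → c ≤ deriv V x) {δ K s : ℝ} (hδ : 0 < δ) (hK : 0 < K)
    (hs : δ * K ≤ s) :
    V (K + s) ≤ Real.exp 1 * (2 / c + 2 / (c * δ) + V 0 / c) * deriv V K * V s := by
  have hdK : 0 < deriv V K := hc.trans_le (hcd K hK)
  set u := V K / deriv V K with hu_def
  have hu : 0 < u := div_pos (one_pos.trans_le (hV1 K hK.le)) hdK
  set x := min u (δ * K)
  have hx : 0 < x := lt_min hu (by positivity)
  have hxs : x ≤ s := (min_le_right _ _).trans hs
  have hVx : 0 < V x := one_pos.trans_le (hV1 x hx.le)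
  have hVs : 0 ≤ V s := zero_le_one.trans (hV1 s (hx.le.trans hxs))
  have hmul := map_add_mul_le_exp_one_mul hV1 hVlc hVd1 hK hx.le hxs
    (by rw [← le_div_iff₀ hdK]; exact min_le_left _ _)
  have hux := div_map_min_le hV1 hVconv hVd1 hc hcd hδ hK hu
    (div_deriv_le_add hV1 hVconv hVd1 hc hcd hK)
  have hVKu : V K = u * deriv V K := by rw [hu_def, div_mul_cancel₀ _ hdK.ne']
  calc V (K + s) ≤ Real.exp 1 * (u / V x) * deriv V K * V s := by
        rw [mul_div_assoc', div_mul_eq_mul_div, div_mul_eq_mul_div, le_div_iff₀ hVx]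
        rw [hVKu] at hmul
        linarith
    _ ≤ _ := by gcongr

end GrowthBounds

lemma tsum_le_mul_tsum_of_le_of_le {ι : Type*} {f g : ι → ℝ} {K : ℝ} (hg : ∀ i, 0 ≤ g i)
    (hgf : ∀ i, g i ≤ f i) (hfg : ∀ i, f i ≤ K * g i) : ∑' i, f i ≤ K * ∑' i, g i := by
  by_cases hs : Summable g
  · rw [← tsum_mul_left]
    have hsK := hs.mul_left K
    exact (hsK.of_nonneg_of_le (fun i => (hg i).trans (hgf i)) hfg).tsum_le_tsum hfg hsK
  · rw [tsum_eq_zero_of_not_summable hs, mul_zero,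
      tsum_eq_zero_of_not_summable fun hf => hs (hf.of_nonneg_of_le hg hgf)]

lemma le_rpow_one_div_of_floor_lt {α δ : ℝ} {k l : ℕ} (hα0 : 0 ≤ α) (hα1 : α < 1) (hδ : 0 < δ)
    (h : ⌊δ * (k : ℝ) ^ (1 - α)⌋ < (l : ℤ)) :
    δ ^ (1 / (1 - α)) * k ≤ (l : ℝ) ^ (1 / (1 - α)) ∧ (l : ℝ) ≤ (l : ℝ) ^ (1 / (1 - α)) := by
  have h1α : 0 < 1 - α := sub_pos.2 hα1
  have hkl : δ * (k : ℝ) ^ (1 - α) < l := Int.floor_lt.1 h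
  have hl : 1 ≤ l := Nat.one_le_iff_ne_zero.2 <| by
    rintro rfl
    exact (Nat.cast_zero (R := ℝ) ▸ hkl).not_ge (by positivity)
  refine ⟨?_, Real.self_le_rpow_of_one_le (by exact_mod_cast hl) ?_⟩
  · calc δ ^ (1 / (1 - α)) * k = (δ * (k : ℝ) ^ (1 - α)) ^ (1 / (1 - α)) := by
          rw [Real.mul_rpow hδ.le (by positivity), ← Real.rpow_mul (Nat.cast_nonneg k),
            mul_one_div_cancel h1α.ne', Real.rpow_one]
      _ ≤ (l : ℝ) ^ (1 / (1 - α)) := Real.rpow_le_rpow (by positivity) hkl.le (by positivity)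
  · rw [le_div_iff₀ h1α]
    linarith

section TailSums

variable {V : ℝ → ℝ} {a : ℕ → ℝ}

lemma tendsto_tail_of_tendsto_mul_tail (hV1 : ∀ x : ℝ, 0 ≤ x → 1 ≤ V x)
    (hVmono : MonotoneOn V (Ici 0)) (hVlc : ConcaveOn ℝ (Ici 0) (fun x : ℝ => Real.log (V x)))
    (hd : ∀ x : ℝ, 0 < x → 0 < deriv V x) (ha : ∀ l, 0 ≤ a l) (n : ℕ → ℤ)
    (h : Tendsto (fun k : ℕ => V k / deriv V k *
      ∑' l : ℕ, if n k < l then V l * a l else 0) atTop (𝓝 0)) :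
    Tendsto (fun k : ℕ => (deriv V k)⁻¹ *
      ∑' l : ℕ, if n k < l then V (k + l) * a l else 0) atTop (𝓝 0) := by
  refine squeeze_zero' ?_ ?_ h <;> filter_upwards [eventually_gt_atTop 0] with k hk
  all_goals
    have hdk := (hd k (Nat.cast_pos.2 hk)).le
    have hG (l : ℕ) : 0 ≤ V l * a l := mul_nonneg (zero_le_one.trans (hV1 l l.cast_nonneg)) (ha l)
    have hGF (l : ℕ) : V l * a l ≤ V (k + l) * a l :=
      mul_le_mul_of_nonneg_right (hVmono (mem_Ici.2 l.cast_nonneg) (mem_Ici.2 (by positivity))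
        (le_add_of_nonneg_left k.cast_nonneg)) (ha l)
  · refine mul_nonneg (inv_nonneg.2 hdk) (tsum_nonneg fun l => ?_)
    split_ifs
    exacts [(hG l).trans (hGF l), le_rfl]
  · have hFG (l : ℕ) : V (k + l) * a l ≤ V k * (V l * a l) := by
      rw [← mul_assoc]
      exact mul_le_mul_of_nonneg_right
        (map_add_le_mul_of_concaveOn_log hV1 hVlc k.cast_nonneg l.cast_nonneg) (ha l)
    rw [div_mul_eq_mul_div, div_eq_inv_mul]
    refine mul_le_mul_of_nonneg_left (tsum_le_mul_tsum_of_le_of_le (fun l => ?_) (fun l => ?_)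
      (fun l => ?_)) (inv_nonneg.2 hdk) <;> split_ifs
    exacts [hG l, le_rfl, hGF l, le_rfl, hFG l, (mul_zero _).ge]

lemma tendsto_tail_of_summable {α δ c : ℝ} (hα0 : 0 ≤ α) (hα1 : α < 1) (hδ : 0 < δ)
    (hV1 : ∀ x : ℝ, 0 ≤ x → 1 ≤ V x) (hVmono : MonotoneOn V (Ici 0))
    (hVconv : ConvexOn ℝ (Ici 0) V) (hVlc : ConcaveOn ℝ (Ici 0) (fun x : ℝ => Real.log (V x)))
    (hVd1 : ∀ x : ℝ, 0 < x → DifferentiableAt ℝ V x) (hc : 0 < c)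
    (hcd : ∀ x : ℝ, 0 < x → c ≤ deriv V x) (ha : ∀ l, 0 ≤ a l)
    (hsum : Summable fun l : ℕ => V ((l : ℝ) ^ (1 / (1 - α))) * a l) :
    Tendsto (fun k : ℕ => (deriv V k)⁻¹ *
      ∑' l : ℕ, if ⌊δ * (k : ℝ) ^ (1 - α)⌋ < (l : ℤ) then V (k + l) * a l else 0)
      atTop (𝓝 0) := by
  set β := 1 / (1 - α)
  set C₀ := Real.exp 1 * (2 / c + 2 / (c * δ ^ β) + V 0 / c)
  have hC₀ : 0 ≤ C₀ := by have := hV1 0 le_rfl; positivity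
  have hterm {k l : ℕ} (hk : 0 < k) (hkl : ⌊δ * (k : ℝ) ^ (1 - α)⌋ < (l : ℤ)) :
      V (k + l) ≤ C₀ * deriv V k * V ((l : ℝ) ^ β) := by
    obtain ⟨hkβ, hlβ⟩ := le_rpow_one_div_of_floor_lt hα0 hα1 hδ hkl
    calc V (k + l) ≤ V (k + (l : ℝ) ^ β) :=
          hVmono (mem_Ici.2 (by positivity)) (mem_Ici.2 (by positivity)) (by linarith)
      _ ≤ C₀ * deriv V k * V ((l : ℝ) ^ β) :=
          map_add_le_mul_deriv_mul hV1 hVconv hVlc hVd1 hc hcd (by positivity)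
            (Nat.cast_pos.2 hk) hkβ
  have hcut : Tendsto (fun k : ℕ => ⌊δ * (k : ℝ) ^ (1 - α)⌋) atTop atTop :=
    tendsto_floor_atTop.comp <| Tendsto.const_mul_atTop hδ <|
      (tendsto_rpow_atTop (by linarith)).comp tendsto_natCast_atTop_atTop
  have hdom := tendsto_tsum_of_dominated_convergence (𝓕 := atTop) (g := fun _ => (0 : ℝ))
    (f := fun (k l : ℕ) => (deriv V k)⁻¹ *
      if ⌊δ * (k : ℝ) ^ (1 - α)⌋ < (l : ℤ) then V (k + l) * a l else 0)
    (hsum.mul_left C₀) (fun l => ?_) ?_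
  · simpa only [tsum_mul_left, tsum_zero] using hdom
  · refine tendsto_const_nhds.congr' ?_
    filter_upwards [hcut.eventually_ge_atTop (l : ℤ)] with k hk
    simp [not_lt.2 hk]
  · filter_upwards [eventually_gt_atTop 0] with k hk l
    have hdk := hc.trans_le (hcd k (Nat.cast_pos.2 hk))
    split_ifs with hkl
    · have := hV1 (k + l) (by positivity)
      have := ha l
      rw [Real.norm_of_nonneg (by positivity), inv_mul_le_iff₀ hdk, ← mul_assoc, ← mul_assoc]
      exact mul_le_mul_of_nonneg_right (by linarith [hterm hk hkl]) (ha l)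
    · simpa using mul_nonneg hC₀ (mul_nonneg (zero_le_one.trans (hV1 _ (by positivity))) (ha l))

end TailSums

theorem tail_sum_vanishes_general (d : ℕ)
    (α : ℝ) (hα0 : 0 ≤ α) (hα1 : α < 1)
    (C : ℕ → Fin d → Fin d → ℝ) (hC : ∀ l i j, 0 ≤ C l i j)
    (V : ℝ → ℝ)
    (hV1 : ∀ x : ℝ, 0 ≤ x → 1 ≤ V x)
    (hVmono : StrictMonoOn V (Ici 0))
    (hVconv : ConvexOn ℝ (Ici 0) V)
    (hVlc : ConcaveOn ℝ (Ici 0) (fun x : ℝ => Real.log (V x)))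
    (hVd1 : ∀ x : ℝ, 0 < x → DifferentiableAt ℝ V x)
    (hV'0 : ∃ c : ℝ, 0 < c ∧ Tendsto (deriv V) (nhdsWithin 0 (Ioi 0)) (nhds c))
    (hyp : ∀ δ : ℝ, 0 < δ →
      (∀ i : Fin d,
        Tendsto (fun k : ℕ => V (k : ℝ) / deriv V (k : ℝ) *
            ∑' l : ℕ, if Int.floor (δ * (k : ℝ) ^ (1 - α)) < (l : ℤ) then
              V (l : ℝ) * ∑ j : Fin d, C l i j else 0)
          atTop (nhds 0)) ∨
      ((∃ c : ℝ, ∀ᶠ l : ℕ in atTop, V (δ * (l : ℝ)) / V (l : ℝ) ≤ c) ∧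
        ∀ i : Fin d,
          Summable fun l : ℕ => V ((l : ℝ) ^ (1 / (1 - α))) * ∑ j : Fin d, C l i j)) :
    ∀ δ : ℝ, 0 < δ → ∀ i : Fin d,
      Tendsto (fun k : ℕ => (deriv V (k : ℝ))⁻¹ *
          ∑' l : ℕ, if Int.floor (δ * (k : ℝ) ^ (1 - α)) < (l : ℤ) then
            V ((k : ℝ) + (l : ℝ)) * ∑ j : Fin d, C l i j else 0)
        atTop (nhds 0) := by
  obtain ⟨c, hc, hlim⟩ := hV'0
  have hcd : ∀ x : ℝ, 0 < x → c ≤ deriv V x := fun x hx =>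
    (hVconv.subset Ioi_subset_Ici_self (convex_Ioi 0)).le_deriv_of_tendsto_nhdsGT
      (fun y hy => hVd1 y hy) hlim hx
  intro δ hδ i
  have ha : ∀ l, 0 ≤ ∑ j : Fin d, C l i j := fun l => Finset.sum_nonneg fun j _ => hC l i j
  rcases hyp δ hδ with hI | ⟨-, hII⟩
  · exact tendsto_tail_of_tendsto_mul_tail hV1 hVmono.monotoneOn hVlc
      (fun x hx => hc.trans_le (hcd x hx)) ha _ (hI i)
  · exact tendsto_tail_of_summable hα0 hα1 hδ hV1 hVmono.monotoneOn hVconv hVlc hVd1 hc hcd ha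
      (hII i)

/-- Lemma A.1: let `V : [0,∞) → [1,∞)` be increasing,
convex, log-concave and differentiable with `V'(0+) > 0`, and let `{C(ℓ)}` be
nonnegative `d×d` matrices. If for every `δ > 0` at least one of the conditions
(I), (II) holds, then for every `δ > 0`,
`(1/V'(k)) Σ_{ℓ > ⌊δ k^{1−α}⌋} V(k+ℓ) C(ℓ) e → 0` componentwise as `k → ∞`. -/
theorem tail_sum_vanishes (d : ℕ) (hd : 0 < d)
    (α : ℝ) (hα0 : 0 ≤ α) (hα1 : α < 1)
    (C : ℕ → Fin d → Fin d → ℝ) (hC : ∀ l i j, 0 ≤ C l i j)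
    (V : ℝ → ℝ)
    (hV1 : ∀ x : ℝ, 0 ≤ x → 1 ≤ V x)
    (hVmono : StrictMonoOn V (Ici 0))
    (hVconv : ConvexOn ℝ (Ici 0) V)
    (hVlc : ConcaveOn ℝ (Ici 0) (fun x : ℝ => Real.log (V x)))
    (hVd1 : ∀ x : ℝ, 0 < x → DifferentiableAt ℝ V x)
    (hV'0 : ∃ c : ℝ, 0 < c ∧ Tendsto (deriv V) (nhdsWithin 0 (Ioi 0)) (nhds c))
    (hyp : ∀ δ : ℝ, 0 < δ →
      (∀ i : Fin d,
        Tendsto (fun k : ℕ => V (k : ℝ) / deriv V (k : ℝ) *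
            ∑' l : ℕ, if Int.floor (δ * (k : ℝ) ^ (1 - α)) < (l : ℤ) then
              V (l : ℝ) * ∑ j : Fin d, C l i j else 0)
          atTop (nhds 0)) ∨
      ((∃ c : ℝ, ∀ᶠ l : ℕ in atTop, V (δ * (l : ℝ)) / V (l : ℝ) ≤ c) ∧
        ∀ i : Fin d,
          Summable fun l : ℕ => V ((l : ℝ) ^ (1 / (1 - α))) * ∑ j : Fin d, C l i j)) :
    ∀ δ : ℝ, 0 < δ → ∀ i : Fin d,
      Tendsto (fun k : ℕ => (deriv V (k : ℝ))⁻¹ *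
          ∑' l : ℕ, if Int.floor (δ * (k : ℝ) ^ (1 - α)) < (l : ℤ) then
            V ((k : ℝ) + (l : ℝ)) * ∑ j : Fin d, C l i j else 0)
        atTop (nhds 0) :=
  tail_sum_vanishes_general d α hα0 hα1 C hC V hV1 hVmono hVconv hVlc hVd1 hV'0 hyp
end

section
/- For all real numbers s1, s2 with 2 < s1 ≤ s2, one has ζ(s2 − 1)/ζ(s2) ≤ ζ(s1 − 1)/ζ(s1); that is, the function s ↦ ζ(s−1)/ζ(s) is nonincreasing on the real interval (2,∞), where ζ denotes the Riemann zeta function. -/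
/-!
With the probability weights `n^{-s} / ζ(s)`, the ratio `ζ(s-1)/ζ(s)` is the mean of `n`.
Cross-multiplied, monotonicity says `ζ(s₂-1) ζ(s₁) ≤ ζ(s₁-1) ζ(s₂)` for `s₁ ≤ s₂`; in terms of
the weights `w n = n^{-s₂}` this is Chebyshev's sum inequality for the two increasing sequences
`n` and `n^{s₂-s₁}`, which follows by symmetrizing the double series of
`w m w n (m - n) (m^{s₂-s₁} - n^{s₂-s₁}) ≥ 0`.
-/

/-- The Riemann zeta function restricted to real arguments `s > 1`:
`ζ(s) = Σ_{n ≥ 1} n^{−s}`. -/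
noncomputable def realZeta (s : ℝ) : ℝ := ∑' n : ℕ, ((n : ℝ) + 1) ^ (-s)

open Real

theorem Monovary.tsum_mul_tsum_le_tsum_mul_tsum {ι : Type*} {w f g : ι → ℝ}
    (hfg : Monovary f g) (hw : 0 ≤ w) (hw_sum : Summable w)
    (hwf : Summable fun i ↦ w i * f i) (hwg : Summable fun i ↦ w i * g i)
    (hwfg : Summable fun i ↦ w i * f i * g i) :
    (∑' i, w i * f i) * ∑' i, w i * g i ≤ (∑' i, w i * f i * g i) * ∑' i, w i := by
  have hprod {a b : ι → ℝ} (ha : Summable a) (hb : Summable b) :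
      (∑' i, a i) * ∑' i, b i = ∑' p : ι × ι, a p.1 * b p.2 :=
    tsum_mul_tsum_of_summable_norm (summable_norm_iff.2 ha) (summable_norm_iff.2 hb)
  have hprod_summable {a b : ι → ℝ} (ha : Summable a) (hb : Summable b) :
      Summable fun p : ι × ι ↦ a p.1 * b p.2 :=
    summable_mul_of_summable_norm (summable_norm_iff.2 ha) (summable_norm_iff.2 hb)
  set F : ι × ι → ℝ := fun p ↦ w p.1 * f p.1 * (w p.2 * g p.2)
  set G : ι × ι → ℝ := fun p ↦ w p.1 * f p.1 * g p.1 * w p.2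
  have hF : Summable F := hprod_summable hwf hwg
  have hG : Summable G := hprod_summable hwfg hw_sum
  have hsymm : ∑' p, (F p + F p.swap) ≤ ∑' p, (G p + G p.swap) := by
    refine Summable.tsum_le_tsum (fun p ↦ ?_) (hF.add hF.prod_symm) (hG.add hG.prod_symm)
    have := mul_le_mul_of_nonneg_left (hfg.mul_add_mul_le_mul_add_mul p.1 p.2)
      (mul_nonneg (hw p.1) (hw p.2))
    simp only [F, G, Prod.fst_swap, Prod.snd_swap]
    linear_combination this
  have htsum_swap (H : ι × ι → ℝ) : ∑' p : ι × ι, H p.swap = ∑' p, H p :=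
    (Equiv.prodComm ι ι).tsum_eq H
  rw [hF.tsum_add hF.prod_symm, hG.tsum_add hG.prod_symm, htsum_swap, htsum_swap] at hsymm
  rw [hprod hwf hwg, hprod hwfg hw_sum]
  linarith

lemma summable_nat_add_one_rpow_neg {s : ℝ} (hs : 1 < s) :
    Summable fun n : ℕ ↦ ((n : ℝ) + 1) ^ (-s) := by
  simpa using (summable_nat_add_iff 1).2 (Real.summable_nat_rpow.2 (by linarith : -s < -1))

lemma realZeta_sub_one_mul_le {s₁ s₂ : ℝ} (hs₁ : 2 < s₁) (hs : s₁ ≤ s₂) :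
    realZeta (s₂ - 1) * realZeta s₁ ≤ realZeta (s₁ - 1) * realZeta s₂ := by
  set x : ℕ → ℝ := fun n ↦ (n : ℝ) + 1
  have hζ (s : ℝ) : realZeta s = ∑' n, x n ^ (-s) := rfl
  have hx (n : ℕ) : 0 < x n := by positivity
  have hmono : Monovary x fun n ↦ x n ^ (s₂ - s₁) := by
    have hx_mono : Monotone x := fun m n h ↦ by simp only [x]; gcongr
    exact hx_mono.monovary fun m n h ↦ rpow_le_rpow (hx m).le (hx_mono h) (by linarith)
  have hwf (n : ℕ) : x n ^ (-s₂) * x n = x n ^ (-(s₂ - 1)) := by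
    rw [← rpow_add_one (hx n).ne']; ring_nf
  have hwg (n : ℕ) : x n ^ (-s₂) * x n ^ (s₂ - s₁) = x n ^ (-s₁) := by
    rw [← rpow_add (hx n)]; ring_nf
  have hwfg (n : ℕ) : x n ^ (-(s₂ - 1)) * x n ^ (s₂ - s₁) = x n ^ (-(s₁ - 1)) := by
    rw [← rpow_add (hx n)]; ring_nf
  have hsum {s : ℝ} (hs : 1 < s) : Summable fun n ↦ x n ^ (-s) :=
    summable_nat_add_one_rpow_neg hs
  have := hmono.tsum_mul_tsum_le_tsum_mul_tsum (w := fun n ↦ x n ^ (-s₂))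
    (fun n ↦ (rpow_pos_of_pos (hx n) _).le) (hsum (by linarith))
    (by simpa only [hwf] using hsum (by linarith : 1 < s₂ - 1))
    (by simpa only [hwg] using hsum (by linarith : 1 < s₁))
    (by simpa only [hwf, hwfg] using hsum (by linarith : 1 < s₁ - 1))
  simpa only [hζ, hwf, hwg, hwfg] using this

lemma realZeta_pos {s : ℝ} (hs : 1 < s) : 0 < realZeta s :=
  (summable_nat_add_one_rpow_neg hs).tsum_pos (fun _ ↦ by positivity) 0 (by positivity)

/-- the function `s ↦ ζ(s−1)/ζ(s)` is nonincreasing on the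
real interval `(2,∞)`. -/
theorem zeta_ratio_antitone :
    ∀ s1 s2 : ℝ, 2 < s1 → s1 ≤ s2 →
      realZeta (s2 - 1) / realZeta s2 ≤ realZeta (s1 - 1) / realZeta s1 := by
  intro s1 s2 hs1 hs12
  rw [div_le_div_iff₀ (realZeta_pos (by linarith)) (realZeta_pos (by linarith))]
  exact realZeta_sub_one_mul_le hs1 hs12
end
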